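/- arXiv:1406.0201 — 7 statements merged into one kernel-verified Lean document; each statement's English description precedes it below -/
import Mathlib

section
/- For all integers n ≥ 1 and 0 ≤ q ≤ n, and every R > 0, there exists C > 0 such that for all u ≥ 1 and all nonzero real numbers α_1, …, α_n with |α_j| ≤ R for each j, one has | ∏_{j=1}^n [α_j / (2π (1 − e^{−2u α_j}))] · ∑_{J ⊆ {1,…,n}, |J| = q} e^{−2u α_J} | ≤ C. -/
/-!
Distributing `e^{-2uα_J} = ∏_{j∈J} e^{-2uα_j}` over the product, each of the `n.choose q` terms
is a product of `n` factors of the form `t / (2π(1 - e^{-2ut}))` or `t e^{-2ut} / (2π(1 - e^{-2ut}))`,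
and the second is the first at `-t`. For `0 < t ≤ R` monotonicity in `u` and `e^{2t} - 1 ≥ 2t`
give `2t ≤ e^{2R} (1 - e^{-2ut})`; for `t < 0` already `e^{-2ut} - 1 ≥ -2ut ≥ 2|t|`.
So every factor is at most `e^{2R}/(4π)` in absolute value, uniformly in `u ≥ 1`.
-/

open Real Finset

theorem abs_div_mul_le_of_abs_mul_le {a c d K : ℝ} (hK : 0 ≤ K)
    (h : |a| * c ≤ K * |d|) : |a / d| * c ≤ K := by
  rcases eq_or_ne d 0 with rfl | hd
  · simpa using hK
  rw [abs_div, div_mul_eq_mul_div, div_le_iff₀ (abs_pos.2 hd)]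
  exact h

theorem abs_prod_mul_prod_le_pow_card {ι : Type*} [Fintype ι] [DecidableEq ι] (f g : ι → ℝ)
    (J : Finset ι) {K : ℝ} (hf : ∀ j, |f j| ≤ K) (hfg : ∀ j, |f j * g j| ≤ K) :
    |(∏ j, f j) * ∏ j ∈ J, g j| ≤ K ^ Fintype.card ι := by
  rw [← univ_inter J, ← prod_ite_mem, ← prod_mul_distrib, abs_prod]
  calc ∏ j, |f j * if j ∈ J then g j else 1| ≤ ∏ _j : ι, K := by
        refine prod_le_prod (fun _ _ => abs_nonneg _) fun j _ => ?_
        split_ifs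
        · exact hfg j
        · simpa using hf j
    _ = K ^ Fintype.card ι := by rw [prod_const, card_univ]

section

variable {t u R : ℝ}

theorem two_mul_abs_le_exp_mul_abs_one_sub_exp (hu : 1 ≤ u) (ht : |t| ≤ R) :
    2 * |t| ≤ exp (2 * R) * |1 - exp (-2 * u * t)| := by
  rcases le_or_gt 0 t with h | h
  · have hmono : exp (-2 * u * t) ≤ exp (-2 * t) := exp_le_exp.2 (by nlinarith)
    have hlt : exp (-2 * t) ≤ 1 := exp_le_one_iff.2 (by linarith)
    have hR : exp (2 * t) ≤ exp (2 * R) := exp_le_exp.2 (by linarith [le_abs_self t])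
    have hcancel : exp (2 * t) * (1 - exp (-2 * t)) = exp (2 * t) - 1 := by
      rw [mul_sub, mul_one, ← exp_add]; simp
    rw [abs_of_nonneg h, abs_of_nonneg (by linarith)]
    calc 2 * t ≤ exp (2 * t) - 1 := by linarith [add_one_le_exp (2 * t)]
      _ = exp (2 * t) * (1 - exp (-2 * t)) := hcancel.symm
      _ ≤ exp (2 * R) * (1 - exp (-2 * u * t)) := by gcongr
  · have hexp : -2 * u * t + 1 ≤ exp (-2 * u * t) := add_one_le_exp _
    have hR : 1 ≤ exp (2 * R) := one_le_exp (by linarith [abs_nonneg t])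
    have hpos : 0 ≤ exp (-2 * u * t) - 1 := by nlinarith
    rw [abs_of_neg h, abs_sub_comm, abs_of_nonneg hpos]
    calc 2 * -t ≤ exp (-2 * u * t) - 1 := by nlinarith
      _ ≤ exp (2 * R) * (exp (-2 * u * t) - 1) := le_mul_of_one_le_left hpos hR

theorem two_mul_abs_mul_exp_le_exp_mul_abs_one_sub_exp (hu : 1 ≤ u) (ht : |t| ≤ R) :
    2 * |t| * exp (-2 * u * t) ≤ exp (2 * R) * |1 - exp (-2 * u * t)| := by
  have h := two_mul_abs_le_exp_mul_abs_one_sub_exp (t := -t) (R := R) hu (by rwa [abs_neg])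
  rw [abs_neg] at h
  have hflip : |1 - exp (-2 * u * -t)| * exp (-2 * u * t) = |1 - exp (-2 * u * t)| := by
    have : (1 - exp (-2 * u * -t)) * exp (-2 * u * t) = exp (-2 * u * t) - 1 := by
      rw [sub_mul, one_mul, ← exp_add, show -2 * u * -t + -2 * u * t = 0 by ring, exp_zero]
    rw [← abs_of_pos (exp_pos (-2 * u * t)), ← abs_mul, this, abs_sub_comm,
      abs_of_pos (exp_pos _)]
  calc 2 * |t| * exp (-2 * u * t)
      ≤ exp (2 * R) * |1 - exp (-2 * u * -t)| * exp (-2 * u * t) := by gcongr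
    _ = exp (2 * R) * |1 - exp (-2 * u * t)| := by rw [mul_assoc, hflip]

theorem abs_div_two_pi_mul_one_sub_exp_mul_le {c : ℝ}
    (h : 2 * |t| * c ≤ exp (2 * R) * |1 - exp (-2 * u * t)|) :
    |t / (2 * π * (1 - exp (-2 * u * t)))| * c ≤ exp (2 * R) / (4 * π) := by
  refine abs_div_mul_le_of_abs_mul_le (by positivity) ?_
  rw [abs_mul, abs_of_pos two_pi_pos]
  calc |t| * c = 2 * |t| * c / 2 := by ring
    _ ≤ exp (2 * R) * |1 - exp (-2 * u * t)| / 2 := by gcongr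
    _ = exp (2 * R) / (4 * π) * (2 * π * |1 - exp (-2 * u * t)|) := by
      field_simp
      ring

end

theorem stmt_5_general (n : ℕ) (q : ℕ) (hq : q ≤ n) (R : ℝ) :
    ∃ C > 0, ∀ u : ℝ, 1 ≤ u → ∀ α : Fin n → ℝ,
      (∀ j, α j ≠ 0) → (∀ j, |α j| ≤ R) →
      |(∏ j : Fin n, α j / (2 * π * (1 - Real.exp (-2 * u * α j)))) *
          ∑ J ∈ Finset.powersetCard q (Finset.univ : Finset (Fin n)),
            Real.exp (-2 * u * ∑ j ∈ J, α j)| ≤ C := by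
  set K := exp (2 * R) / (4 * π)
  have hchoose := Nat.choose_pos hq
  refine ⟨n.choose q * K ^ n, by positivity, fun u hu α _ hαR => ?_⟩
  set P := ∏ j : Fin n, α j / (2 * π * (1 - exp (-2 * u * α j)))
  have hterm : ∀ J ∈ powersetCard q univ, |P * exp (-2 * u * ∑ j ∈ J, α j)| ≤ K ^ n := by
    intro J _
    rw [mul_sum, exp_sum]
    simpa using abs_prod_mul_prod_le_pow_card _ (fun j => exp (-2 * u * α j)) J
      (fun j => by
        simpa using abs_div_two_pi_mul_one_sub_exp_mul_le (c := 1)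
          (by simpa using two_mul_abs_le_exp_mul_abs_one_sub_exp hu (hαR j)))
      (fun j => by
        rw [abs_mul, abs_of_pos (exp_pos _)]
        exact abs_div_two_pi_mul_one_sub_exp_mul_le
          (two_mul_abs_mul_exp_le_exp_mul_abs_one_sub_exp hu (hαR j)))
  calc |P * ∑ J ∈ powersetCard q univ, exp (-2 * u * ∑ j ∈ J, α j)|
      ≤ ∑ J ∈ powersetCard q univ, |P * exp (-2 * u * ∑ j ∈ J, α j)| := by
        rw [mul_sum]
        exact abs_sum_le_sum_abs _ _
    _ ≤ #(powersetCard q (univ : Finset (Fin n))) • K ^ n := sum_le_card_nsmul _ _ _ hterm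
    _ = n.choose q * K ^ n := by simp

/-- For `n ≥ 1`, `0 ≤ q ≤ n` and `R > 0`, there is `C > 0` such that for all
`u ≥ 1` and all nonzero `α_1, …, α_n` with `|α_j| ≤ R`:
`| ∏_j [α_j / (2π (1 − e^{−2uα_j}))] · ∑_{|J| = q} e^{−2u α_J} | ≤ C`. -/
theorem stmt_5 (n : ℕ) (hn : 1 ≤ n) (q : ℕ) (hq : q ≤ n) (R : ℝ) (hR : 0 < R) :
    ∃ C > 0, ∀ u : ℝ, 1 ≤ u → ∀ α : Fin n → ℝ,
      (∀ j, α j ≠ 0) → (∀ j, |α j| ≤ R) →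
      |(∏ j : Fin n, α j / (2 * π * (1 - Real.exp (-2 * u * α j)))) *
          ∑ J ∈ Finset.powersetCard q (Finset.univ : Finset (Fin n)),
            Real.exp (-2 * u * ∑ j ∈ J, α j)| ≤ C :=
  stmt_5_general n q hq R
end

section
/- Let α_1, …, α_n be nonzero real numbers and let 0 ≤ q ≤ n. If the number of negative α_j is not equal to q, then lim_{u→∞} ∑_{J ⊆ {1,…,n}, |J| = q} e^{−2u α_J} · ∏_{j=1}^n [α_j / (2π (1 − e^{−2u α_j}))] = 0. -/
open Real Finset Filter

/-!
Write `weight a u = a / (2π (1 - e^{-2ua}))`. Multiplying `weight a u` by `e^{-2ua}` gives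
`weight (-a) u`, so the `J`-th summand is `∏ j, weight (±α j) u` with the sign flipped exactly on
`J`. As `u → ∞`, `weight a u → max a 0 / (2π)`. Since `J` is not the set of negative `α j`, some
flipped coefficient is `≤ 0`, and its factor tends to `0`.
-/

noncomputable def weight (a u : ℝ) : ℝ := a / (2 * π * (1 - exp (-2 * u * a)))

lemma exp_mul_weight (a u : ℝ) : exp (-2 * u * a) * weight a u = weight (-a) u := by
  have hneg : -2 * u * -a = -(-2 * u * a) := by ring
  rw [weight, weight, hneg, exp_neg]
  set e := exp (-2 * u * a)
  have he : e ≠ 0 := (exp_pos _).ne'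
  by_cases he1 : e = 1
  · -- both sides divide by zero
    simp [he1]
  have h1 : 1 - e ≠ 0 := sub_ne_zero.mpr (Ne.symm he1)
  have h2 : 1 - e⁻¹ ≠ 0 := by rwa [sub_ne_zero, ne_comm, inv_ne_one]
  field_simp
  ring

lemma exp_sum_mul_prod_weight {ι : Type*} [Fintype ι] [DecidableEq ι] (J : Finset ι)
    (α : ι → ℝ) (u : ℝ) :
    exp (-2 * u * ∑ j ∈ J, α j) * ∏ j, weight (α j) u =
      ∏ j, weight (if j ∈ J then -α j else α j) u := by
  have hexp : exp (-2 * u * ∑ j ∈ J, α j) = ∏ j, if j ∈ J then exp (-2 * u * α j) else 1 := by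
    rw [prod_ite_mem, univ_inter, mul_sum, exp_sum]
  rw [hexp, ← prod_mul_distrib]
  refine prod_congr rfl fun j _ => ?_
  split_ifs
  · exact exp_mul_weight (α j) u
  · exact one_mul _

lemma tendsto_exp_neg_two_mul_atTop_of_neg {a : ℝ} (ha : a < 0) :
    Tendsto (fun u : ℝ => exp (-2 * u * a)) atTop atTop := by
  refine tendsto_exp_atTop.comp ?_
  have := tendsto_id.atTop_mul_const (r := -2 * a) (by linarith)
  convert this using 2 with u; simp; ring

lemma tendsto_exp_neg_two_mul_nhds_zero_of_pos {a : ℝ} (ha : 0 < a) :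
    Tendsto (fun u : ℝ => exp (-2 * u * a)) atTop (nhds 0) := by
  refine tendsto_exp_atBot.comp ?_
  have := tendsto_id.atTop_mul_const_of_neg (r := -2 * a) (by linarith)
  convert this using 2 with u; simp; ring

lemma tendsto_weight (a : ℝ) : Tendsto (weight a) atTop (nhds (max a 0 / (2 * π))) := by
  rcases lt_trichotomy a 0 with ha | rfl | ha
  · rw [max_eq_right ha.le, zero_div]
    have hexp := tendsto_neg_atTop_atBot.comp (tendsto_exp_neg_two_mul_atTop_of_neg ha)
    exact tendsto_const_nhds.div_atBot
      ((tendsto_atBot_add_const_left _ 1 hexp).const_mul_atBot (by positivity))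
  · have hzero : weight 0 = fun _ => 0 := funext fun u => by simp [weight]
    simp [hzero]
  · rw [max_eq_left ha.le]
    have hden := ((tendsto_exp_neg_two_mul_nhds_zero_of_pos ha).const_sub 1).const_mul (2 * π)
    have h := (tendsto_const_nhds (x := a)).div hden (by positivity)
    rwa [sub_zero, mul_one] at h

lemma tendsto_prod_weight_of_nonpos {ι : Type*} [Fintype ι] (β : ι → ℝ) {j₀ : ι}
    (hj₀ : β j₀ ≤ 0) :
    Tendsto (fun u => ∏ j, weight (β j) u) atTop (nhds 0) := by
  have h := tendsto_finsetProd univ fun j _ => tendsto_weight (β j)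
  rwa [prod_eq_zero (mem_univ j₀) (by rw [max_eq_right hj₀, zero_div])] at h

theorem stmt_7_general (n q : ℕ) (α : Fin n → ℝ)
    (hneg : (Finset.univ.filter fun j => α j < 0).card ≠ q) :
    Tendsto
      (fun u : ℝ =>
        (∑ J ∈ Finset.powersetCard q (Finset.univ : Finset (Fin n)),
            Real.exp (-2 * u * ∑ j ∈ J, α j)) *
          ∏ j : Fin n, α j / (2 * π * (1 - Real.exp (-2 * u * α j))))
      atTop (nhds 0) := by
  simp_rw [sum_mul]
  change Tendsto (fun u => ∑ J ∈ powersetCard q univ,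
    exp (-2 * u * ∑ j ∈ J, α j) * ∏ j, weight (α j) u) atTop (nhds 0)
  simp_rw [exp_sum_mul_prod_weight]
  suffices ∀ J ∈ powersetCard q univ,
      Tendsto (fun u => ∏ j, weight (if j ∈ J then -α j else α j) u) atTop (nhds 0) by
    simpa using tendsto_finsetSum _ this
  intro J hJ
  obtain ⟨j, hj⟩ : ∃ j, ¬(j ∈ J ↔ α j < 0) := by
    by_contra! h
    refine hneg ((congrArg card ?_).trans (mem_powersetCard.mp hJ).2)
    ext j
    simp [h j]
  refine tendsto_prod_weight_of_nonpos _ (j₀ := j) ?_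
  split_ifs with hjJ
  · simp only [hjJ, true_iff, not_lt] at hj
    linarith
  · simp only [hjJ, false_iff, not_not] at hj
    exact hj.le

/-- If `α_1, …, α_n` are nonzero reals and the number of negative ones is not
`q`, then `lim_{u→∞} ∑_{|J| = q} e^{−2u α_J} · ∏_j [α_j / (2π (1 − e^{−2uα_j}))] = 0`. -/
theorem stmt_7 (n q : ℕ) (hq : q ≤ n) (α : Fin n → ℝ) (hα : ∀ j, α j ≠ 0)
    (hneg : (Finset.univ.filter fun j => α j < 0).card ≠ q) :
    Tendsto
      (fun u : ℝ =>
        (∑ J ∈ Finset.powersetCard q (Finset.univ : Finset (Fin n)),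
            Real.exp (-2 * u * ∑ j ∈ J, α j)) *
          ∏ j : Fin n, α j / (2 * π * (1 - Real.exp (-2 * u * α j))))
      atTop (nhds 0) :=
  stmt_7_general n q α hneg
end

section
/- Let α_1, …, α_n be real numbers, with n_- of them negative, n_0 of them zero, and n_+ of them positive, and let q be an integer with n_- ≤ q ≤ n_- + n_0. Then lim_{u→∞} ∑_{J ⊆ {1,…,n}, |J| = q} e^{u(α_{∁J} − α_J)} · ∏_{j : α_j ≠ 0} [α_j / sinh(u α_j)] = C(n_0, q − n_-) · (−1)^{n_-} · ∏_{j : α_j ≠ 0} (2 α_j), where C(n_0, q − n_-) denotes the binomial coefficient 'n_0 choose q − n_-'. -/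
open Real Finset Filter Topology

/-!
For `J` fixed, put `β j = -α j` for `j ∈ J` and `β j = α j` otherwise. Then the summand is
`∏_{α j ≠ 0} e^{u β j} β j / sinh (u β j)`, and since `e^x b / sinh x = 2b / (1 - e^{-2x})`,
each factor tends to `2 β j` if `β j > 0` and to `0` otherwise. Hence `J` contributes
`∏ |2 α j|` exactly when it contains every `j` with `α j < 0` and no `j` with `α j > 0`, i.e.
`J` is the negative set together with `q - n₋` of the `n₀` indices where `α` vanishes; finally
`∏ |2 α j| = (-1)^{n₋} ∏ 2 α j`.
-/

lemma exp_mul_div_sinh (x b : ℝ) : exp x * (b / sinh x) = 2 * b / (1 - exp (-(2 * x))) := by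
  have h : 1 - exp (-(2 * x)) = (exp x - exp (-x)) / exp x := by
    rw [eq_div_iff (exp_ne_zero x), sub_mul, ← exp_add, one_mul]
    ring_nf
  rw [h, sinh_eq, div_div_eq_mul_div, div_div_eq_mul_div]
  ring

lemma tendsto_exp_mul_mul_div_sinh (b : ℝ) :
    Tendsto (fun u => exp (u * b) * (b / sinh (u * b))) atTop
      (𝓝 (if 0 < b then 2 * b else 0)) := by
  simp_rw [exp_mul_div_sinh]
  rcases lt_trichotomy b 0 with hb | rfl | hb
  · rw [if_neg hb.not_gt]
    have hexp : Tendsto (fun u => -exp (-(2 * (u * b)))) atTop atBot := by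
      refine tendsto_neg_atTop_atBot.comp (tendsto_exp_comp_atTop.2 ?_)
      exact (tendsto_id.atTop_mul_const (by linarith : 0 < -(2 * b))).congr fun u => by
        rw [id]; ring
    simpa only [sub_eq_add_neg] using
      tendsto_const_nhds.div_atBot (tendsto_const_nhds.add_atBot hexp)
  · simp
  · rw [if_pos hb]
    have hexp : Tendsto (fun u => exp (-(2 * (u * b)))) atTop (𝓝 0) := by
      refine tendsto_exp_comp_nhds_zero.2 ?_
      exact (tendsto_id.atTop_mul_const_of_neg (by linarith : -(2 * b) < 0)).congr fun u => by
        rw [id]; ring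
    simpa [Pi.div_def] using
      (tendsto_const_nhds (x := 2 * b)).div (hexp.const_sub 1) (by norm_num)

lemma abs_div_sinh_mul_abs (b u : ℝ) : |b| / sinh (u * |b|) = b / sinh (u * b) := by
  rcases abs_cases b with ⟨h, -⟩ | ⟨h, -⟩ <;> rw [h]
  rw [mul_neg, sinh_neg, neg_div_neg_eq]

lemma prod_abs_eq_neg_one_pow_mul_prod {ι R : Type*} [CommRing R] [LinearOrder R]
    [IsStrictOrderedRing R] (s : Finset ι) (f : ι → R) :
    ∏ j ∈ s, |f j| = (-1) ^ #{j ∈ s | f j < 0} * ∏ j ∈ s, f j := by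
  rw [← prod_filter_mul_prod_filter_not s (fun j => f j < 0),
    ← prod_filter_mul_prod_filter_not s (fun j => f j < 0) (f := f), ← mul_assoc, ← prod_neg,
    prod_congr rfl fun j hj => abs_of_neg (mem_filter.1 hj).2,
    prod_congr rfl fun j hj => abs_of_nonneg (not_lt.1 (mem_filter.1 hj).2)]

lemma card_filter_powersetCard_sdiff_eq {ι : Type*} [Fintype ι] [DecidableEq ι] {A B : Finset ι}
    (hAB : Disjoint A B) {q : ℕ} (hq : #A ≤ q) :
    #{J ∈ powersetCard q univ | J \ B = A} = (#B).choose (q - #A) := by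
  rw [← card_powersetCard]
  refine card_nbij' (· ∩ B) (· ∪ A) ?_ ?_ ?_ ?_
  · intro J hJ
    simp only [coe_filter, mem_powersetCard, subset_univ, true_and, Set.mem_ofPred_eq,
      SetLike.mem_coe, inter_subset_right] at hJ ⊢
    obtain ⟨rfl, rfl⟩ := hJ
    have := card_sdiff_add_card_inter J B
    omega
  · intro K hK
    simp only [SetLike.mem_coe, mem_powersetCard, coe_filter, subset_univ, true_and,
      Set.mem_ofPred_eq] at hK ⊢
    obtain ⟨hKB, hK⟩ := hK
    refine ⟨?_, ?_⟩
    · rw [card_union_of_disjoint (hAB.mono_right hKB).symm]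
      omega
    · rw [union_sdiff_distrib, sdiff_eq_empty_iff_subset.2 hKB, empty_union, hAB.sdiff_eq_left]
  · intro J hJ
    simp only [coe_filter, mem_powersetCard, subset_univ, true_and, Set.mem_ofPred_eq] at hJ
    dsimp only
    rw [← hJ.2, union_comm, sdiff_union_inter]
  · intro K hK
    rw [SetLike.mem_coe, mem_powersetCard] at hK
    dsimp only
    rw [union_inter_distrib_right, inter_eq_left.2 hK.1, disjoint_iff_inter_eq_empty.1 hAB,
      union_empty]

lemma abs_piecewise_neg {ι M : Type*} [DecidableEq ι] [AddGroup M] [Lattice M] (f : ι → M)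
    (J : Finset ι) (j : ι) :
    |J.piecewise (-f) f j| = |f j| := by
  by_cases hj : j ∈ J <;> simp [hj]

section SignedSums

variable {ι : Type*} [Fintype ι] [DecidableEq ι]

lemma sum_compl_sub_sum_eq_sum_piecewise {M : Type*} [AddCommGroup M] (f : ι → M)
    (J : Finset ι) : ∑ j ∈ Jᶜ, f j - ∑ j ∈ J, f j = ∑ j, J.piecewise (-f) f j := by
  rw [sum_piecewise, univ_inter, ← compl_eq_univ_sdiff, Pi.neg_def, sum_neg_distrib]
  abel

lemma exp_mul_sum_compl_sub_sum_mul_prod_div_sinh (α : ι → ℝ) (J : Finset ι) (u : ℝ) :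
    exp (u * (∑ j ∈ Jᶜ, α j - ∑ j ∈ J, α j)) *
        ∏ j ∈ univ.filter fun j => α j ≠ 0, α j / sinh (u * α j) =
      ∏ j ∈ univ.filter fun j => α j ≠ 0, exp (u * J.piecewise (-α) α j) *
        (J.piecewise (-α) α j / sinh (u * J.piecewise (-α) α j)) := by
  have hdiv : ∀ j, J.piecewise (-α) α j / sinh (u * J.piecewise (-α) α j) =
      α j / sinh (u * α j) := fun j => by
    rw [← abs_div_sinh_mul_abs, abs_piecewise_neg, abs_div_sinh_mul_abs]
  have hsum : ∑ j ∈ Jᶜ, α j - ∑ j ∈ J, α j =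
      ∑ j ∈ univ.filter fun j => α j ≠ 0, J.piecewise (-α) α j := by
    rw [sum_compl_sub_sum_eq_sum_piecewise, sum_filter_of_ne fun j _ hj => ?_]
    rwa [← abs_ne_zero, abs_piecewise_neg, abs_ne_zero] at hj
  simp_rw [hsum, mul_sum, exp_sum, ← prod_mul_distrib, hdiv]

lemma forall_pos_piecewise_neg_iff (α : ι → ℝ) (J : Finset ι) :
    (∀ j ∈ univ.filter fun j => α j ≠ 0, 0 < J.piecewise (-α) α j) ↔
      J \ univ.filter (fun j => α j = 0) = univ.filter fun j => α j < 0 := by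
  simp only [Finset.ext_iff, mem_filter, mem_univ, true_and]
  refine forall_congr' fun j => ?_
  by_cases hj : j ∈ J
  · simp only [piecewise_eq_of_mem _ _ _ hj, Pi.neg_apply, neg_pos, Finset.mem_sdiff, hj,
      mem_filter, mem_univ, true_and]
    exact ⟨fun h => ⟨h, ne_of_lt⟩, fun h => h.1⟩
  · simp only [piecewise_eq_of_notMem _ _ _ hj, Finset.mem_sdiff, hj, false_and, false_iff, not_lt]
    exact ⟨fun h => not_lt.1 fun hlt => lt_asymm hlt (h hlt.ne), fun h hne => h.lt_of_ne' hne⟩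

lemma tendsto_exp_mul_sum_compl_sub_sum_mul_prod_div_sinh (α : ι → ℝ) (J : Finset ι) :
    Tendsto (fun u => exp (u * (∑ j ∈ Jᶜ, α j - ∑ j ∈ J, α j)) *
        ∏ j ∈ univ.filter fun j => α j ≠ 0, α j / sinh (u * α j)) atTop
      (𝓝 (if J \ univ.filter (fun j => α j = 0) = univ.filter fun j => α j < 0 then
        ∏ j ∈ univ.filter fun j => α j ≠ 0, |2 * α j| else 0)) := by
  have hlim := tendsto_finsetProd (univ.filter fun j => α j ≠ 0)
    fun j _ => tendsto_exp_mul_mul_div_sinh (J.piecewise (-α) α j)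
  have hval : ∀ j, (if 0 < J.piecewise (-α) α j then 2 * J.piecewise (-α) α j else 0) =
      if 0 < J.piecewise (-α) α j then |2 * α j| else 0 := fun j => by
    split_ifs with h
    · rw [abs_mul, ← abs_piecewise_neg α J, abs_of_pos h, abs_two]
    · rfl
  simp_rw [hval, prod_ite_zero, forall_pos_piecewise_neg_iff] at hlim
  simpa only [exp_mul_sum_compl_sub_sum_mul_prod_div_sinh] using hlim

end SignedSums

theorem stmt_8_general (n : ℕ) (α : Fin n → ℝ) (nneg nzero q : ℕ)
    (hneg : (Finset.univ.filter fun j => α j < 0).card = nneg)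
    (hzero : (Finset.univ.filter fun j => α j = 0).card = nzero)
    (hq1 : nneg ≤ q) :
    Tendsto
      (fun u : ℝ =>
        ∑ J ∈ Finset.powersetCard q (Finset.univ : Finset (Fin n)),
          Real.exp (u * ((∑ j ∈ Jᶜ, α j) - ∑ j ∈ J, α j)) *
            ∏ j ∈ Finset.univ.filter fun j => α j ≠ 0,
              α j / Real.sinh (u * α j))
      atTop
      (nhds ((nzero.choose (q - nneg) : ℝ) * (-1) ^ nneg *
        ∏ j ∈ Finset.univ.filter fun j => α j ≠ 0, 2 * α j)) := by
  have hdisj : Disjoint (univ.filter fun j => α j < 0) (univ.filter fun j => α j = 0) :=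
    disjoint_filter.2 fun j _ h => h.ne
  have hcount := card_filter_powersetCard_sdiff_eq hdisj (hneg ▸ hq1)
  have hsign : ∏ j ∈ univ.filter (fun j => α j ≠ 0), |2 * α j| =
      (-1) ^ nneg * ∏ j ∈ univ.filter (fun j => α j ≠ 0), 2 * α j := by
    rw [prod_abs_eq_neg_one_pow_mul_prod, filter_filter, ← hneg]
    congr 2
    exact congrArg card <| filter_congr fun j _ =>
      ⟨fun h => by linarith [h.2], fun h => ⟨h.ne, by linarith⟩⟩
  have hlim := tendsto_finsetSum (powersetCard q univ)
    fun J _ => tendsto_exp_mul_sum_compl_sub_sum_mul_prod_div_sinh α J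
  rwa [sum_ite, sum_const_zero, add_zero, sum_const, hcount, hneg, hzero, nsmul_eq_mul, hsign,
    ← mul_assoc] at hlim

/-- Let `α_1, …, α_n` be reals with `n₋` negative, `n₀` zero, and let
`n₋ ≤ q ≤ n₋ + n₀`.  Then
`lim_{u→∞} ∑_{|J| = q} e^{u(α_{∁J} − α_J)} ∏_{α_j ≠ 0} [α_j / sinh(u α_j)]
  = (n₀ choose (q − n₋)) · (−1)^{n₋} · ∏_{α_j ≠ 0} 2 α_j`. -/
theorem stmt_8 (n : ℕ) (α : Fin n → ℝ) (nneg nzero q : ℕ)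
    (hneg : (Finset.univ.filter fun j => α j < 0).card = nneg)
    (hzero : (Finset.univ.filter fun j => α j = 0).card = nzero)
    (hq1 : nneg ≤ q) (hq2 : q ≤ nneg + nzero) :
    Tendsto
      (fun u : ℝ =>
        ∑ J ∈ Finset.powersetCard q (Finset.univ : Finset (Fin n)),
          Real.exp (u * ((∑ j ∈ Jᶜ, α j) - ∑ j ∈ J, α j)) *
            ∏ j ∈ Finset.univ.filter fun j => α j ≠ 0,
              α j / Real.sinh (u * α j))
      atTop
      (nhds ((nzero.choose (q - nneg) : ℝ) * (-1) ^ nneg *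
        ∏ j ∈ Finset.univ.filter fun j => α j ≠ 0, 2 * α j)) :=
  stmt_8_general n α nneg nzero q hneg hzero hq1
end

section
/- Let α_1, …, α_n be real numbers, with n_- of them negative and n_0 of them zero, and let q be an integer with 0 ≤ q ≤ n such that q < n_- or q > n_- + n_0. Then lim_{u→∞} ∑_{J ⊆ {1,…,n}, |J| = q} e^{u(α_{∁J} − α_J)} · ∏_{j : α_j ≠ 0} [α_j / sinh(u α_j)] = 0. -/
/-!
Write `c_J = α_{∁J} − α_J`. Since `α_j / sinh (u α_j) ~ 2 |α_j| e^{−u|α_j|}` as `u → ∞`, the `J`-th term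
behaves like a constant times `e^{u (c_J − ∑ |α_j|)}`, and `c_J ≤ ∑ |α_j|` with equality exactly
when `J` contains no positive and its complement no negative `α_j`. That forces
`n₋ ≤ |J| ≤ n₋ + n₀`, so for `q` outside this range every term decays exponentially.
-/

open Real Finset Filter Topology

section SignedSum

variable {ι : Type*} [Fintype ι] [DecidableEq ι]

theorem sum_compl_sub_sum_lt_sum_abs (α : ι → ℝ) {J : Finset ι}
    (h : ∃ j, (j ∈ J ∧ 0 < α j) ∨ (j ∉ J ∧ α j < 0)) :
    ∑ j ∈ Jᶜ, α j - ∑ j ∈ J, α j < ∑ j, |α j| := by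
  have hsigned : ∑ j ∈ Jᶜ, α j - ∑ j ∈ J, α j = ∑ j, if j ∈ J then -α j else α j := by
    rw [sum_ite, sum_neg_distrib, filter_mem_eq_inter, univ_inter, filter_not,
      filter_mem_eq_inter, univ_inter, compl_eq_univ_sdiff]
    ring
  rw [hsigned]
  obtain ⟨j₀, hj₀⟩ := h
  refine sum_lt_sum (fun j _ => ?_) ⟨j₀, mem_univ _, ?_⟩
  · split_ifs
    · exact neg_le_abs _
    · exact le_abs_self _
  · rcases hj₀ with ⟨hJ, hpos⟩ | ⟨hJ, hneg⟩
    · rw [if_pos hJ, abs_of_pos hpos]; linarith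
    · rw [if_neg hJ, abs_of_neg hneg]; linarith

theorem exists_mem_pos_or_notMem_neg_of_card (α : ι → ℝ) {J : Finset ι}
    (h : #J < #{j | α j < 0} ∨ #{j | α j < 0} + #{j | α j = 0} < #J) :
    ∃ j, (j ∈ J ∧ 0 < α j) ∨ (j ∉ J ∧ α j < 0) := by
  rcases h with h | h
  · obtain ⟨j, hj, hjJ⟩ := exists_mem_notMem_of_card_lt_card h
    exact ⟨j, .inr ⟨hjJ, (mem_filter.mp hj).2⟩⟩
  · have hnonpos : #{j | α j ≤ 0} = #{j | α j < 0} + #{j | α j = 0} := by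
      rw [← card_union_of_disjoint (disjoint_filter.mpr fun _ _ h₁ h₂ => h₁.ne h₂), ← filter_or]
      simp only [le_iff_lt_or_eq]
    obtain ⟨j, hjJ, hj⟩ := exists_mem_notMem_of_card_lt_card (hnonpos ▸ h)
    exact ⟨j, .inl ⟨hjJ, by simpa using hj⟩⟩

end SignedSum

theorem sinh_div_exp_eq (t : ℝ) : sinh t / exp t = (1 - exp (-(2 * t))) / 2 := by
  rw [sinh_eq, show -(2 * t) = -t - t by ring, exp_sub]
  field_simp

theorem tendsto_exp_div_sinh_atTop : Tendsto (fun t => exp t / sinh t) atTop (𝓝 2) := by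
  have h : Tendsto (fun t => sinh t / exp t) atTop (𝓝 2⁻¹) := by
    simp_rw [sinh_div_exp_eq]
    have := tendsto_exp_atBot.comp
      (tendsto_neg_atTop_atBot.comp (tendsto_id.const_mul_atTop two_pos))
    simpa using (this.const_sub 1).div_const 2
  simpa using h.inv₀ (by norm_num)

theorem div_sinh_mul_eq_abs (a u : ℝ) : a / sinh (u * a) = |a| / sinh (u * |a|) := by
  rcases abs_cases a with ⟨ha, -⟩ | ⟨ha, -⟩ <;> rw [ha]
  rw [mul_neg, sinh_neg, neg_div_neg_eq]

theorem tendsto_exp_mul_abs_mul_div_sinh {a : ℝ} (ha : a ≠ 0) :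
    Tendsto (fun u => exp (u * |a|) * (a / sinh (u * a))) atTop (𝓝 (2 * |a|)) := by
  have hu : Tendsto (fun u => u * |a|) atTop atTop :=
    tendsto_id.atTop_mul_const (abs_pos.mpr ha)
  refine ((tendsto_exp_div_sinh_atTop.comp hu).mul_const |a|).congr fun u => ?_
  simp only [Function.comp, div_sinh_mul_eq_abs a u]
  ring

theorem tendsto_exp_mul_mul_prod_div_sinh {ι : Type*} (S : Finset ι) (a : ι → ℝ) {c : ℝ}
    (ha : ∀ j ∈ S, a j ≠ 0) (hc : c < ∑ j ∈ S, |a j|) :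
    Tendsto (fun u => exp (u * c) * ∏ j ∈ S, a j / sinh (u * a j)) atTop (𝓝 0) := by
  have hdecay : Tendsto (fun u => exp (u * (c - ∑ j ∈ S, |a j|))) atTop (𝓝 0) :=
    tendsto_exp_atBot.comp (tendsto_id.atTop_mul_const_of_neg (by linarith))
  have hprod := tendsto_finsetProd S fun j hj => tendsto_exp_mul_abs_mul_div_sinh (ha j hj)
  refine (zero_mul (∏ j ∈ S, 2 * |a j|) ▸ hdecay.mul hprod).congr fun u => ?_
  rw [prod_mul_distrib, ← exp_sum, ← mul_assoc, ← exp_add, ← mul_sum]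
  ring_nf

theorem stmt_9_general (n : ℕ) (α : Fin n → ℝ) (nneg nzero q : ℕ)
    (hneg : (Finset.univ.filter fun j => α j < 0).card = nneg)
    (hzero : (Finset.univ.filter fun j => α j = 0).card = nzero)
    (hq : q < nneg ∨ nneg + nzero < q) :
    Tendsto
      (fun u : ℝ =>
        ∑ J ∈ Finset.powersetCard q (Finset.univ : Finset (Fin n)),
          Real.exp (u * ((∑ j ∈ Jᶜ, α j) - ∑ j ∈ J, α j)) *
            ∏ j ∈ Finset.univ.filter fun j => α j ≠ 0,
              α j / Real.sinh (u * α j))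
      atTop (nhds 0) := by
  have hsum_abs : ∑ j ∈ univ.filter (α · ≠ 0), |α j| = ∑ j, |α j| :=
    sum_filter_of_ne fun _ _ h => abs_ne_zero.mp h
  have hterm : ∀ J ∈ powersetCard q (univ : Finset (Fin n)), Tendsto
      (fun u : ℝ => exp (u * (∑ j ∈ Jᶜ, α j - ∑ j ∈ J, α j)) *
        ∏ j ∈ univ.filter (α · ≠ 0), α j / sinh (u * α j)) atTop (𝓝 0) := fun J hJ => by
    rw [mem_powersetCard_univ] at hJ
    refine tendsto_exp_mul_mul_prod_div_sinh _ α (fun j hj => (mem_filter.mp hj).2) ?_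
    rw [hsum_abs]
    exact sum_compl_sub_sum_lt_sum_abs α
      (exists_mem_pos_or_notMem_neg_of_card α (hJ ▸ hneg ▸ hzero ▸ hq))
  simpa using tendsto_finsetSum _ hterm

/-- Let `α_1, …, α_n` be reals with `n₋` negative and `n₀` zero, and let
`0 ≤ q ≤ n` with `q < n₋` or `q > n₋ + n₀`.  Then
`lim_{u→∞} ∑_{|J| = q} e^{u(α_{∁J} − α_J)} ∏_{α_j ≠ 0} [α_j / sinh(u α_j)] = 0`. -/
theorem stmt_9 (n : ℕ) (α : Fin n → ℝ) (nneg nzero q : ℕ)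
    (hneg : (Finset.univ.filter fun j => α j < 0).card = nneg)
    (hzero : (Finset.univ.filter fun j => α j = 0).card = nzero)
    (hqn : q ≤ n) (hq : q < nneg ∨ nneg + nzero < q) :
    Tendsto
      (fun u : ℝ =>
        ∑ J ∈ Finset.powersetCard q (Finset.univ : Finset (Fin n)),
          Real.exp (u * ((∑ j ∈ Jᶜ, α j) - ∑ j ∈ J, α j)) *
            ∏ j ∈ Finset.univ.filter fun j => α j ≠ 0,
              α j / Real.sinh (u * α j))
      atTop (nhds 0) :=
  stmt_9_general n α nneg nzero q hneg hzero hq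
end

section
/- Let V_0, …, V_n be finite-dimensional complex inner product spaces and d_j : V_j → V_{j+1} linear maps (with d_{−1} = 0 and d_n = 0) satisfying d_{j+1} ∘ d_j = 0 for all j. Let Δ_j = d_j† ∘ d_j + d_{j−1} ∘ d_{j−1}† be the Laplacians, where † denotes the adjoint with respect to the inner products. Then for every u > 0 and every 0 ≤ q ≤ n, ∑_{j=0}^q (−1)^{q−j} dim ker Δ_j ≤ ∑_{j=0}^q (−1)^{q−j} Tr(exp(−u Δ_j)), with equality when q = n. -/
/-!
Put `R(T) = Tr exp(-uT) - dim ker T`, computed from the power series of the exponential. For a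
symmetric `T` with eigenvalues `μᵢ` this is `∑ exp(-u μᵢ)` minus the number of zero eigenvalues,
so `R(T) ≥ 0`. Two algebraic facts make `R` additive along the complex:
* `d_{j+1} d_j = 0` makes the two halves of `Δ_{j+1} = d_{j+1}† d_{j+1} + d_j d_j†` annihilate each
  other, so all their positive powers split and `R(Δ_{j+1}) = R(d_{j+1}† d_{j+1}) + R(d_j d_j†)`;
* `Tr (g f)^(k+1) = Tr (f g)^(k+1)` and `rank d = rank d†` give `R(d d†) = R(d† d)`.
Hence `R(Δ_j) = G_j + G_{j-1}` with `G_j = R(d_j† d_j) ≥ 0`, the alternating sum of the `R(Δ_j)` up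
to `q` telescopes to `G_q ≥ 0`, and `G_n = 0` because `d_n = 0`.
-/

open Finset LinearMap

open NormedSpace Module
open scoped Nat

theorem add_pow_succ_of_mul_eq_zero {R : Type*} [Semiring R] {a b : R} (hab : a * b = 0)
    (hba : b * a = 0) (n : ℕ) : (a + b) ^ (n + 1) = a ^ (n + 1) + b ^ (n + 1) := by
  induction n with
  | zero => simp
  | succ n ih =>
    have hab' : a ^ (n + 1) * b = 0 := by rw [pow_succ, mul_assoc, hab, mul_zero]
    have hba' : b ^ (n + 1) * a = 0 := by rw [pow_succ, mul_assoc, hba, mul_zero]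
    rw [pow_succ _ (n + 1), ih, add_mul, mul_add, mul_add, hab', hba', add_zero, zero_add,
      ← pow_succ, ← pow_succ]

theorem LinearMap.trace_comp_pow_succ_comm {R M N : Type*} [CommRing R] [AddCommGroup M]
    [Module R M] [Module.Free R M] [Module.Finite R M] [AddCommGroup N] [Module R N]
    [Module.Free R N] [Module.Finite R N] (f : M →ₗ[R] N) (g : N →ₗ[R] M) (n : ℕ) :
    trace R M ((g ∘ₗ f) ^ (n + 1)) = trace R N ((f ∘ₗ g) ^ (n + 1)) := by
  have hpow : ∀ k : ℕ, (g ∘ₗ f) ^ (k + 1) = g ∘ₗ (((f ∘ₗ g) ^ k) ∘ₗ f) := by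
    intro k
    induction k with
    | zero => rfl
    | succ k ih =>
      rw [pow_succ, ih, pow_succ]
      rfl
  rw [hpow, trace_comp_comm', pow_succ]
  rfl

theorem Finset.sum_range_neg_one_pow_mul_eq_of_eq_add {R : Type*} [CommRing R] {F G : ℕ → R}
    (h0 : F 0 = G 0) (hsucc : ∀ j, F (j + 1) = G (j + 1) + G j) (q : ℕ) :
    ∑ j ∈ range (q + 1), (-1) ^ (q - j) * F j = G q := by
  induction q with
  | zero => simp [h0]
  | succ q ih =>
    have hflip : ∑ j ∈ range (q + 1), (-1 : R) ^ (q + 1 - j) * F j = -G q := by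
      rw [← ih, ← sum_neg_distrib]
      refine sum_congr rfl fun j hj => ?_
      rw [Nat.sub_add_comm (mem_range_succ_iff.mp hj), pow_succ]
      ring
    rw [sum_range_succ, hflip, Nat.sub_self, pow_zero, one_mul, hsucc]
    ring

namespace LinearMap

section TraceExp

variable {V W : Type*} [NormedAddCommGroup V] [NormedSpace ℂ V] [FiniteDimensional ℂ V]
  [NormedAddCommGroup W] [NormedSpace ℂ W] [FiniteDimensional ℂ W]

noncomputable def traceExp (T : V →ₗ[ℂ] V) : ℂ :=
  trace ℂ V (exp (LinearMap.toContinuousLinearMap T)).toLinearMap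

theorem hasSum_traceExp (T : V →ₗ[ℂ] V) :
    HasSum (fun n => (n ! : ℂ)⁻¹ * trace ℂ V (T ^ n)) (traceExp T) := by
  let τ : (V →L[ℂ] V) →ₗ[ℂ] ℂ := trace ℂ V ∘ₗ ContinuousLinearMap.coeLM ℂ
  have h := (exp_series_hasSum_exp' (𝕂 := ℂ) (LinearMap.toContinuousLinearMap T)).map τ
    τ.continuous_of_finiteDimensional
  simpa [traceExp, τ, Function.comp_def, ← map_pow (Module.End.toContinuousLinearMap V)] using h

theorem traceExp_zero : traceExp (0 : V →ₗ[ℂ] V) = finrank ℂ V := by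
  simp [traceExp]

theorem traceExp_add_of_mul_eq_zero {A B : V →ₗ[ℂ] V} (hAB : A * B = 0) (hBA : B * A = 0) :
    traceExp (A + B) = traceExp A + traceExp B - finrank ℂ V := by
  refine (hasSum_traceExp (A + B)).unique <|
    (((hasSum_traceExp A).add (hasSum_traceExp B)).sub
      (hasSum_ite_eq 0 (finrank ℂ V : ℂ))).congr_fun fun n => ?_
  cases n with
  | zero => simp
  | succ n => simp [add_pow_succ_of_mul_eq_zero hAB hBA, mul_add]

theorem traceExp_comp_comm (f : V →ₗ[ℂ] W) (g : W →ₗ[ℂ] V) :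
    traceExp (g ∘ₗ f) - finrank ℂ V = traceExp (f ∘ₗ g) - finrank ℂ W := by
  rw [sub_eq_sub_iff_add_eq_add]
  refine ((hasSum_traceExp (g ∘ₗ f)).add (hasSum_ite_eq 0 (finrank ℂ W : ℂ))).unique <|
    ((hasSum_traceExp (f ∘ₗ g)).add (hasSum_ite_eq 0 (finrank ℂ V : ℂ))).congr_fun fun n => ?_
  cases n with
  | zero => simp [add_comm]
  | succ n => rw [trace_comp_pow_succ_comm, if_neg n.succ_ne_zero, if_neg n.succ_ne_zero]

noncomputable def reducedHeatTrace (u : ℝ) (T : V →ₗ[ℂ] V) : ℝ :=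
  (traceExp ((-(u : ℂ)) • T)).re - finrank ℂ (ker T)

theorem reducedHeatTrace_def (u : ℝ) (T : V →ₗ[ℂ] V) :
    reducedHeatTrace u T =
      (trace ℂ V (exp ((-(u : ℂ)) • LinearMap.toContinuousLinearMap T)).toLinearMap).re -
        finrank ℂ (ker T) := by
  rw [reducedHeatTrace, traceExp, map_smul]

theorem reducedHeatTrace_zero (u : ℝ) :
    reducedHeatTrace u (0 : V →ₗ[ℂ] V) = 0 := by
  rw [reducedHeatTrace, smul_zero, traceExp_zero, ker_zero, finrank_top]
  simp

end TraceExp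

section Spectral

variable {V : Type*} [NormedAddCommGroup V] [InnerProductSpace ℂ V] [FiniteDimensional ℂ V]
  {T : V →ₗ[ℂ] V}

theorem IsSymmetric.trace_pow_eq_sum_eigenvalues_pow (hT : T.IsSymmetric) (n : ℕ) :
    trace ℂ V (T ^ n) = ∑ i, (hT.eigenvalues rfl i : ℂ) ^ n := by
  rw [trace_eq_sum_inner _ (hT.eigenvectorBasis rfl)]
  refine sum_congr rfl fun i _ => ?_
  rw [(hT.hasEigenvector_eigenvectorBasis rfl i).pow_apply n, inner_smul_right,
    inner_self_eq_norm_sq_to_K, (hT.eigenvectorBasis rfl).orthonormal.1 i]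
  simp

theorem IsSymmetric.traceExp_smul (hT : T.IsSymmetric) (c : ℂ) :
    traceExp (c • T) = ∑ i, Complex.exp (c * hT.eigenvalues rfl i) := by
  simp_rw [Complex.exp_eq_exp_ℂ]
  refine (hasSum_traceExp (c • T)).unique <|
    (hasSum_sum fun i _ => exp_series_hasSum_exp' (𝕂 := ℂ) (c * hT.eigenvalues rfl i)).congr_fun
      fun n => ?_
  simp only [smul_pow, map_smul, hT.trace_pow_eq_sum_eigenvalues_pow, smul_eq_mul, mul_sum,
    mul_pow]

theorem IsSymmetric.finrank_ker_le_re_traceExp_smul (hT : T.IsSymmetric) (u : ℝ) :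
    (finrank ℂ (ker T) : ℝ) ≤ (traceExp ((u : ℂ) • T)).re := by
  rw [hT.traceExp_smul, Complex.re_sum, ← Module.End.eigenspace_zero,
    ← hT.card_filter_eigenvalues_eq rfl]
  calc (#{i | (hT.eigenvalues rfl i : ℂ) = 0} : ℝ)
      = ∑ i with (hT.eigenvalues rfl i : ℂ) = 0, (Complex.exp (u * hT.eigenvalues rfl i)).re := by
        rw [card_eq_sum_ones, Nat.cast_sum]
        refine sum_congr rfl fun i hi => ?_
        simp [(mem_filter.mp hi).2]
    _ ≤ ∑ i, (Complex.exp (u * hT.eigenvalues rfl i)).re :=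
        sum_le_sum_of_subset_of_nonneg (filter_subset _ _) fun i _ _ => by
          rw [← Complex.ofReal_mul, ← Complex.ofReal_exp, Complex.ofReal_re]
          positivity

end Spectral

section Laplacian

variable {U V W : Type*} [NormedAddCommGroup U] [InnerProductSpace ℂ U] [FiniteDimensional ℂ U]
  [NormedAddCommGroup V] [InnerProductSpace ℂ V] [FiniteDimensional ℂ V]
  [NormedAddCommGroup W] [InnerProductSpace ℂ W] [FiniteDimensional ℂ W]

theorem ker_adjoint_comp_self_add_self_comp_adjoint (f : V →ₗ[ℂ] W) (g : U →ₗ[ℂ] V) :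
    ker (adjoint f ∘ₗ f + g ∘ₗ adjoint g) = ker f ⊓ ker (adjoint g) := by
  refine le_antisymm (fun x hx => ?_) fun x hx => ?_
  · have hinner : inner ℂ (f x) (f x) + inner ℂ (adjoint g x) (adjoint g x) = 0 := by
      rw [← adjoint_inner_left f x (f x), adjoint_inner_right g (adjoint g x) x, ← inner_add_left]
      simp only [mem_ker, add_apply, comp_apply] at hx
      rw [hx, inner_zero_left]
    have hnorm : ‖f x‖ ^ 2 + ‖adjoint g x‖ ^ 2 = 0 := by
      simpa [inner_self_eq_norm_sq_to_K, ← Complex.ofReal_pow] using congrArg Complex.re hinner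
    rw [add_eq_zero_iff_of_nonneg (by positivity) (by positivity)] at hnorm
    simp_all
  · simp_all

theorem finrank_ker_adjoint_comp_self_add_self_comp_adjoint {f : V →ₗ[ℂ] W} {g : U →ₗ[ℂ] V}
    (hfg : f ∘ₗ g = 0) :
    finrank ℂ (ker (adjoint f ∘ₗ f + g ∘ₗ adjoint g)) + finrank ℂ V =
      finrank ℂ (ker (adjoint f ∘ₗ f)) + finrank ℂ (ker (g ∘ₗ adjoint g)) := by
  have hsup : ker f ⊔ ker (adjoint g) = ⊤ := by
    rw [eq_top_iff, ← (range g).sup_orthogonal_of_hasOrthogonalProjection, orthogonal_range]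
    exact sup_le_sup_right (range_le_ker_iff.mpr hfg) _
  rw [ker_adjoint_comp_self_add_self_comp_adjoint, ker_adjoint_comp_self, ker_self_comp_adjoint,
    ← Submodule.finrank_sup_add_finrank_inf_eq, hsup, finrank_top, add_comm]

theorem finrank_ker_self_comp_adjoint_add_finrank (f : V →ₗ[ℂ] W) :
    finrank ℂ (ker (f ∘ₗ adjoint f)) + finrank ℂ V =
      finrank ℂ (ker (adjoint f ∘ₗ f)) + finrank ℂ W := by
  rw [ker_self_comp_adjoint, ker_adjoint_comp_self, ← f.finrank_range_add_finrank_ker,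
    ← (adjoint f).finrank_range_add_finrank_ker, finrank_range_adjoint]
  ring

theorem IsSymmetric.reducedHeatTrace_nonneg {T : V →ₗ[ℂ] V} (hT : T.IsSymmetric) (u : ℝ) :
    0 ≤ reducedHeatTrace u T := by
  have h := hT.finrank_ker_le_re_traceExp_smul (-u)
  push_cast at h
  exact sub_nonneg.mpr h

theorem reducedHeatTrace_self_comp_adjoint (u : ℝ) (f : V →ₗ[ℂ] W) :
    reducedHeatTrace u (f ∘ₗ adjoint f) = reducedHeatTrace u (adjoint f ∘ₗ f) := by
  have htr := congrArg Complex.re (traceExp_comp_comm (adjoint f) ((-(u : ℂ)) • f))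
  have hker := congrArg ((↑) : ℕ → ℝ) (finrank_ker_self_comp_adjoint_add_finrank f)
  rw [comp_smul, smul_comp, Complex.sub_re, Complex.sub_re, Complex.natCast_re,
    Complex.natCast_re] at htr
  push_cast at hker
  rw [reducedHeatTrace, reducedHeatTrace]
  linarith

theorem reducedHeatTrace_adjoint_comp_self_add_self_comp_adjoint {f : V →ₗ[ℂ] W}
    {g : U →ₗ[ℂ] V} (u : ℝ) (hfg : f ∘ₗ g = 0) :
    reducedHeatTrace u (adjoint f ∘ₗ f + g ∘ₗ adjoint g) =
      reducedHeatTrace u (adjoint f ∘ₗ f) + reducedHeatTrace u (g ∘ₗ adjoint g) := by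
  have hAB : (adjoint f ∘ₗ f) * (g ∘ₗ adjoint g) = 0 := by
    rw [Module.End.mul_eq_comp, comp_assoc, ← comp_assoc (adjoint g) g f, hfg, zero_comp,
      comp_zero]
  have hBA : (g ∘ₗ adjoint g) * (adjoint f ∘ₗ f) = 0 := by
    rw [Module.End.mul_eq_comp, comp_assoc, ← comp_assoc f (adjoint f) (adjoint g),
      ← adjoint_comp, hfg, map_zero, zero_comp, comp_zero]
  have htr := congrArg Complex.re <| traceExp_add_of_mul_eq_zero
    (A := (-(u : ℂ)) • (adjoint f ∘ₗ f)) (B := (-(u : ℂ)) • (g ∘ₗ adjoint g))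
    (by rw [smul_mul_smul_comm, hAB, smul_zero]) (by rw [smul_mul_smul_comm, hBA, smul_zero])
  have hker := congrArg ((↑) : ℕ → ℝ) (finrank_ker_adjoint_comp_self_add_self_comp_adjoint hfg)
  rw [← smul_add, Complex.sub_re, Complex.add_re, Complex.natCast_re] at htr
  push_cast at hker
  rw [reducedHeatTrace, reducedHeatTrace, reducedHeatTrace]
  linarith

end Laplacian

end LinearMap

theorem stmt_10_general (n : ℕ) (V : ℕ → Type*)
    [∀ j, NormedAddCommGroup (V j)] [∀ j, InnerProductSpace ℂ (V j)]
    [∀ j, FiniteDimensional ℂ (V j)]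
    (d : ∀ j : ℕ, V j →ₗ[ℂ] V (j + 1))
    (hdn : d n = 0)
    (hdd : ∀ j, d (j + 1) ∘ₗ d j = 0)
    (Δ : ∀ j : ℕ, V j →ₗ[ℂ] V j)
    (hΔ0 : Δ 0 = adjoint (d 0) ∘ₗ d 0)
    (hΔsucc : ∀ j, Δ (j + 1) =
      adjoint (d (j + 1)) ∘ₗ d (j + 1) + d j ∘ₗ adjoint (d j))
    (u : ℝ) :
    (∀ q ≤ n,
      ∑ j ∈ Finset.range (q + 1),
          (-1 : ℝ) ^ (q - j) * (Module.finrank ℂ (ker (Δ j)) : ℝ)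
        ≤ ∑ j ∈ Finset.range (q + 1),
            (-1 : ℝ) ^ (q - j) *
              (LinearMap.trace ℂ (V j)
                ((NormedSpace.exp
                  ((-(u : ℂ)) • (Δ j).toContinuousLinearMap)).toLinearMap)).re)
    ∧
    ∑ j ∈ Finset.range (n + 1),
        (-1 : ℝ) ^ (n - j) * (Module.finrank ℂ (ker (Δ j)) : ℝ)
      = ∑ j ∈ Finset.range (n + 1),
          (-1 : ℝ) ^ (n - j) *
            (LinearMap.trace ℂ (V j)
              ((NormedSpace.exp
                ((-(u : ℂ)) • (Δ j).toContinuousLinearMap)).toLinearMap)).re := by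
  set G : ℕ → ℝ := fun q => reducedHeatTrace u (adjoint (d q) ∘ₗ d q)
  have hG : ∀ q, 0 ≤ G q := fun q =>
    (isPositive_adjoint_comp_self (d q)).isSymmetric.reducedHeatTrace_nonneg u
  have hGn : G n = 0 := by
    simp only [G, hdn, comp_zero, reducedHeatTrace_zero]
  have hsum : ∀ q, ∑ j ∈ range (q + 1), (-1 : ℝ) ^ (q - j) * reducedHeatTrace u (Δ j) = G q :=
    sum_range_neg_one_pow_mul_eq_of_eq_add (by rw [hΔ0]) fun j => by
      rw [hΔsucc, reducedHeatTrace_adjoint_comp_self_add_self_comp_adjoint u (hdd j),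
        reducedHeatTrace_self_comp_adjoint]
  simp only [reducedHeatTrace_def, mul_sub, sum_sub_distrib] at hsum
  exact ⟨fun q _ => by linarith [hsum q, hG q], by linarith [hsum n]⟩

/-- Spectral inequality for a finite cochain complex `(V_j, d_j)` of
finite-dimensional complex inner product spaces, with Laplacians
`Δ_j = d_j† d_j + d_{j−1} d_{j−1}†` (and `d_{−1} = 0`, `d_n = 0`):
for every `u > 0` and `0 ≤ q ≤ n`,
`∑_{j=0}^q (−1)^{q−j} dim ker Δ_j ≤ ∑_{j=0}^q (−1)^{q−j} Tr exp(−u Δ_j)`,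
with equality for `q = n`. -/
theorem stmt_10 (n : ℕ) (V : ℕ → Type*)
    [∀ j, NormedAddCommGroup (V j)] [∀ j, InnerProductSpace ℂ (V j)]
    [∀ j, FiniteDimensional ℂ (V j)]
    (d : ∀ j : ℕ, V j →ₗ[ℂ] V (j + 1))
    (hdn : d n = 0)
    (hdd : ∀ j, d (j + 1) ∘ₗ d j = 0)
    (Δ : ∀ j : ℕ, V j →ₗ[ℂ] V j)
    (hΔ0 : Δ 0 = adjoint (d 0) ∘ₗ d 0)
    (hΔsucc : ∀ j, Δ (j + 1) =
      adjoint (d (j + 1)) ∘ₗ d (j + 1) + d j ∘ₗ adjoint (d j))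
    (u : ℝ) (hu : 0 < u) :
    (∀ q ≤ n,
      ∑ j ∈ Finset.range (q + 1),
          (-1 : ℝ) ^ (q - j) * (Module.finrank ℂ (ker (Δ j)) : ℝ)
        ≤ ∑ j ∈ Finset.range (q + 1),
            (-1 : ℝ) ^ (q - j) *
              (LinearMap.trace ℂ (V j)
                ((NormedSpace.exp
                  ((-(u : ℂ)) • (Δ j).toContinuousLinearMap)).toLinearMap)).re)
    ∧
    ∑ j ∈ Finset.range (n + 1),
        (-1 : ℝ) ^ (n - j) * (Module.finrank ℂ (ker (Δ j)) : ℝ)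
      = ∑ j ∈ Finset.range (n + 1),
          (-1 : ℝ) ^ (n - j) *
            (LinearMap.trace ℂ (V j)
              ((NormedSpace.exp
                ((-(u : ℂ)) • (Δ j).toContinuousLinearMap)).toLinearMap)).re :=
  stmt_10_general n V d hdn hdd Δ hΔ0 hΔsucc u
end

section
/- Fix ε > 0 and a smooth even function f : ℝ → [0,1] with f(v) = 1 for |v| ≤ ε/2 and f(v) = 0 for |v| ≥ ε, and define G_u(a) = (1/√(2π)) ∫_ℝ e^{i v a} e^{−v²/2} (1 − f(√u v)) dv for u > 0, a ∈ ℝ. Then for every m ∈ ℕ and T > 0 there exists C > 0 such that for all u with 0 < u < T and all a ∈ ℝ, |a|^m · |G_u(a)| ≤ C · exp(−ε²/(32 u)). -/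
open Real MeasureTheory

open scoped FourierTransform

/-!
With `g(v) = e^{-v²/2} (1 - f(√u v))`, the integral `G_u(a)` is `(2π)^{-1/2}` times the Fourier
transform of `g` at `-a/2π`, so `|a|^m |G_u(a)| ≤ (2π)^{-1/2} ∫ |g⁽ᵐ⁾|`. The Hermite formula for
the derivatives of the Gaussian and the Leibniz rule give `|g⁽ᵏ⁾(v)| ≤ Λ e^{-v²/4}` for `k ≤ m`,
with `Λ` uniform in `u < T` because the rescaling only costs powers of `√u`. Since
`f(√u v) = 1` for `|v| ≤ ε/(2√u)`, `g⁽ᵐ⁾` vanishes there, and on the remaining range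
`e^{-v²/4} ≤ e^{-ε²/(32u)} e^{-v²/8}`; integrating the last Gaussian gives the bound.
-/

theorem exists_pos_forall_le_mul_of_forall_exists {F : ℕ → ℝ → ℝ} {ρ : ℝ → ℝ}
    (hρ : ∀ x, 0 ≤ ρ x) (h : ∀ i, ∃ C, ∀ x, F i x ≤ C * ρ x) (n : ℕ) :
    ∃ C > 0, ∀ i ≤ n, ∀ x, F i x ≤ C * ρ x := by
  have hev : ∀ i ∈ Finset.range (n + 1), ∀ᶠ C in Filter.atTop, ∀ x, F i x ≤ C * ρ x := by
    intro i _
    obtain ⟨C₀, hC₀⟩ := h i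
    filter_upwards [Filter.eventually_ge_atTop C₀] with C hC x
    exact (hC₀ x).trans (by gcongr; exact hρ x)
  obtain ⟨C, hCpos, hC⟩ :=
    ((Filter.eventually_gt_atTop 0).and ((Filter.eventually_all_finset _).2 hev)).exists
  exact ⟨C, hCpos, fun i hi => hC i (Finset.mem_range.2 (Nat.lt_succ_of_le hi))⟩

open Polynomial in
theorem Polynomial.exists_abs_aeval_le_mul_exp_sq_div_four (p : ℝ[X]) :
    ∃ C, ∀ x : ℝ, |aeval x p| ≤ C * exp (x ^ 2 / 4) := by
  set d := p.natDegree
  refine ⟨(∑ j ∈ Finset.range (d + 1), |p.coeff j|) * exp ((d : ℝ) ^ 2), fun x => ?_⟩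
  have hpow : ∀ j ∈ Finset.range (d + 1), |x| ^ j ≤ exp ((d : ℝ) ^ 2) * exp (x ^ 2 / 4) := by
    intro j hj
    have hjd : j ≤ d := Nat.lt_succ_iff.mp (Finset.mem_range.mp hj)
    calc |x| ^ j ≤ (1 + |x|) ^ d :=
          (pow_le_pow_left₀ (abs_nonneg x) (by linarith) j).trans
            (pow_le_pow_right₀ (by linarith [abs_nonneg x]) hjd)
      _ ≤ exp |x| ^ d := pow_le_pow_left₀ (by positivity) (by linarith [add_one_le_exp |x|]) d
      _ = exp (d * |x|) := (exp_nat_mul _ d).symm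
      _ ≤ exp ((d : ℝ) ^ 2 + x ^ 2 / 4) :=
          exp_le_exp.mpr (by nlinarith [sq_nonneg (|x| / 2 - d), sq_abs x])
      _ = exp ((d : ℝ) ^ 2) * exp (x ^ 2 / 4) := exp_add _ _
  rw [aeval_eq_sum_range, Finset.sum_mul, Finset.sum_mul]
  refine (Finset.abs_sum_le_sum_abs _ _).trans (Finset.sum_le_sum fun j hj => ?_)
  rw [smul_eq_mul, abs_mul, abs_pow, mul_assoc]
  exact mul_le_mul_of_nonneg_left (hpow j hj) (abs_nonneg _)

open Polynomial in
theorem exists_norm_iteratedDeriv_gaussian_le (n : ℕ) :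
    ∃ A, ∀ x : ℝ, ‖iteratedDeriv n (fun y : ℝ => (exp (-(y ^ 2 / 2)) : ℂ)) x‖ ≤
      A * exp (-(x ^ 2 / 4)) := by
  obtain ⟨C, hC⟩ :=
    ((hermite n).map (algebraMap ℤ ℝ)).exists_abs_aeval_le_mul_exp_sq_div_four
  refine ⟨C, fun x => ?_⟩
  have hsmooth : ContDiff ℝ n fun y : ℝ => exp (-(y ^ 2 / 2)) := by fun_prop
  have hreal : ‖iteratedDeriv n (fun y : ℝ => (exp (-(y ^ 2 / 2)) : ℂ)) x‖ =
      ‖iteratedDeriv n (fun y : ℝ => exp (-(y ^ 2 / 2))) x‖ := by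
    simp only [← norm_iteratedFDeriv_eq_norm_iteratedDeriv]
    exact Complex.ofRealLI.norm_iteratedFDeriv_comp_left (hsmooth.contDiffAt (x := x)) le_rfl
  rw [hreal, iteratedDeriv_eq_iterate,
    deriv_gaussian_eq_hermite_mul_gaussian, norm_mul, norm_mul, norm_pow, norm_neg, norm_one,
    one_pow, one_mul, norm_of_nonneg (exp_pos _).le, Real.norm_eq_abs, ← aeval_map_algebraMap ℝ]
  calc _ ≤ C * exp (x ^ 2 / 4) * exp (-(x ^ 2 / 2)) := by gcongr; exact hC x
    _ = C * exp (-(x ^ 2 / 4)) := by rw [mul_assoc, ← exp_add]; ring_nf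

theorem norm_iteratedDeriv_mul_le_of_forall_le {𝔸 : Type*} [NormedRing 𝔸] [NormedAlgebra ℝ 𝔸]
    {φ ψ : ℝ → 𝔸} {n : ℕ} (hφ : ContDiff ℝ n φ) (hψ : ContDiff ℝ n ψ) {x A B : ℝ}
    (hA : ∀ i ≤ n, ‖iteratedDeriv i φ x‖ ≤ A) (hB : ∀ j ≤ n, ‖iteratedDeriv j ψ x‖ ≤ B) :
    ‖iteratedDeriv n (fun y => φ y * ψ y) x‖ ≤ 2 ^ n * A * B := by
  have hA0 : 0 ≤ A := (norm_nonneg _).trans (hA 0 n.zero_le)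
  rw [← norm_iteratedFDeriv_eq_norm_iteratedDeriv]
  refine (norm_iteratedFDeriv_mul_le hφ hψ x le_rfl).trans ?_
  calc _ ≤ ∑ i ∈ Finset.range (n + 1), (n.choose i : ℝ) * A * B := by
        refine Finset.sum_le_sum fun i hi => ?_
        have hin : i ≤ n := Nat.lt_succ_iff.mp (Finset.mem_range.mp hi)
        simp only [norm_iteratedFDeriv_eq_norm_iteratedDeriv]
        gcongr
        exacts [hA i hin, hB (n - i) (n.sub_le i)]
    _ = 2 ^ n * A * B := by
        rw [← Finset.sum_mul, ← Finset.sum_mul, ← Nat.cast_sum, Nat.sum_range_choose,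
          Nat.cast_pow, Nat.cast_ofNat]

theorem norm_iteratedDeriv_comp_const_mul_le {E : Type*} [NormedAddCommGroup E] [NormedSpace ℝ E]
    {χ : ℝ → E} {n : ℕ} (hχ : ContDiff ℝ n χ) {B : ℝ} (hB : ∀ w, ‖iteratedDeriv n χ w‖ ≤ B)
    (s x : ℝ) : ‖iteratedDeriv n (fun y => χ (s * y)) x‖ ≤ |s| ^ n * B := by
  rw [iteratedDeriv_comp_const_smul hχ, norm_smul, norm_pow, Real.norm_eq_abs]
  gcongr
  exact hB _

theorem HasCompactSupport.exists_norm_iteratedDeriv_const_sub_le {E : Type*} [NormedAddCommGroup E]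
    [NormedSpace ℝ E] {φ : ℝ → E} {n : ℕ} (hφ : ContDiff ℝ n φ) (hsupp : HasCompactSupport φ)
    (c : E) : ∃ B, ∀ w, ‖iteratedDeriv n (fun y => c - φ y) w‖ ≤ B := by
  obtain ⟨K, hK⟩ := (hsupp.iteratedFDeriv n).exists_bound_of_continuous
    (hφ.continuous_iteratedFDeriv le_rfl)
  refine ⟨‖c‖ + K, fun w => ?_⟩
  rw [iteratedDeriv_fun_sub contDiffAt_const hφ.contDiffAt, iteratedDeriv_const]
  refine (norm_sub_le _ _).trans (add_le_add ?_ ?_)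
  · split_ifs <;> simp
  · simpa only [norm_iteratedFDeriv_eq_norm_iteratedDeriv] using hK w

theorem HasCompactSupport.exists_pos_norm_iteratedDeriv_one_sub_ofReal_le {f : ℝ → ℝ}
    (hf : ContDiff ℝ (⊤ : ℕ∞) f) (hsupp : HasCompactSupport f) (n : ℕ) :
    ∃ B > 0, ∀ j ≤ n, ∀ w, ‖iteratedDeriv j (fun y => 1 - (f y : ℂ)) w‖ ≤ B := by
  have hfC : ∀ j : ℕ, ContDiff ℝ j fun y => (f y : ℂ) := fun j =>
    Complex.ofRealCLM.contDiff.comp (hf.of_le (by exact_mod_cast le_top))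
  have hsuppC : HasCompactSupport fun y => (f y : ℂ) := hsupp.comp_left Complex.ofReal_zero
  simpa only [mul_one] using exists_pos_forall_le_mul_of_forall_exists (ρ := fun _ => 1)
    (fun _ => zero_le_one) (fun j => by
      simpa only [mul_one] using hsuppC.exists_norm_iteratedDeriv_const_sub_le (hfC j) 1) n

theorem pow_mul_norm_fourier_le_integral_norm_iteratedDeriv {E : Type*} [NormedAddCommGroup E]
    [NormedSpace ℂ E] {g : ℝ → E} {n : ℕ} (hg : ContDiff ℝ n g)
    (hint : ∀ k ≤ n, Integrable (iteratedDeriv k g)) (w : ℝ) :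
    (2 * π * |w|) ^ n * ‖𝓕 g w‖ ≤ ∫ v, ‖iteratedDeriv n g v‖ := by
  have h := congrFun (Real.fourier_iteratedDeriv (N := n) hg
    (fun k hk => hint k (by exact_mod_cast hk)) le_rfl) w
  calc (2 * π * |w|) ^ n * ‖𝓕 g w‖ = ‖𝓕 (iteratedDeriv n g) w‖ := by
        rw [h, norm_smul, norm_pow]
        simp [abs_of_pos pi_pos]
    _ ≤ ∫ v, ‖iteratedDeriv n g v‖ := VectorFourier.norm_fourierIntegral_le_integral_norm _ _ _ _ _

theorem integral_norm_le_of_le_gaussian_of_eq_zero {E : Type*} [NormedAddCommGroup E]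
    {h : ℝ → E} {Λ r : ℝ} (hle : ∀ v, ‖h v‖ ≤ Λ * exp (-(v ^ 2 / 4))) (hr : 0 ≤ r)
    (hzero : ∀ v, |v| < r → h v = 0) :
    ∫ v, ‖h v‖ ≤ Λ * √(8 * π) * exp (-(r ^ 2 / 8)) := by
  have hΛ : 0 ≤ Λ := nonneg_of_mul_nonneg_left ((norm_nonneg _).trans (hle 0)) (exp_pos _)
  have hpoint : ∀ v, ‖h v‖ ≤ Λ * exp (-(r ^ 2 / 8)) * exp (-(1 / 8) * v ^ 2) := by
    intro v
    rcases lt_or_ge |v| r with hv | hv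
    · rw [hzero v hv, norm_zero]
      positivity
    · have hrv : r ^ 2 ≤ v ^ 2 := by simpa only [sq_abs] using pow_le_pow_left₀ hr hv 2
      calc ‖h v‖ ≤ Λ * exp (-(v ^ 2 / 4)) := hle v
        _ = Λ * (exp (-(v ^ 2 / 8)) * exp (-(1 / 8) * v ^ 2)) := by
          rw [← exp_add]; ring_nf
        _ ≤ Λ * (exp (-(r ^ 2 / 8)) * exp (-(1 / 8) * v ^ 2)) := by
          gcongr
        _ = _ := by ring
  calc ∫ v, ‖h v‖ ≤ ∫ v, Λ * exp (-(r ^ 2 / 8)) * exp (-(1 / 8) * v ^ 2) :=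
        integral_mono_of_nonneg (Filter.Eventually.of_forall fun v => norm_nonneg _)
          ((integrable_exp_neg_mul_sq (by norm_num)).const_mul _)
          (Filter.Eventually.of_forall hpoint)
    _ = Λ * √(8 * π) * exp (-(r ^ 2 / 8)) := by
        rw [integral_const_mul, integral_gaussian, div_div_eq_mul_div, div_one, mul_comm π]
        ring

theorem pow_mul_norm_fourier_le_of_le_gaussian {E : Type*} [NormedAddCommGroup E]
    [NormedSpace ℂ E] {g : ℝ → E} {n : ℕ} (hg : ContDiff ℝ n g) {Λ r : ℝ}
    (hle : ∀ k ≤ n, ∀ v, ‖iteratedDeriv k g v‖ ≤ Λ * exp (-(v ^ 2 / 4))) (hr : 0 ≤ r)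
    (hzero : ∀ v, |v| < r → iteratedDeriv n g v = 0) (w : ℝ) :
    (2 * π * |w|) ^ n * ‖𝓕 g w‖ ≤ Λ * √(8 * π) * exp (-(r ^ 2 / 8)) := by
  have hint : ∀ k ≤ n, Integrable (iteratedDeriv k g) := fun k hk =>
    ((integrable_exp_neg_mul_sq (by norm_num : (0 : ℝ) < 1 / 4)).const_mul Λ).mono'
      (hg.continuous_iteratedDeriv k (by exact_mod_cast hk)).aestronglyMeasurable
      (Filter.Eventually.of_forall fun v => by convert hle k hk v using 3; ring)
  exact (pow_mul_norm_fourier_le_integral_norm_iteratedDeriv hg hint w).trans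
    (integral_norm_le_of_le_gaussian_of_eq_zero (hle n le_rfl) hr hzero)

theorem integral_exp_I_mul_smul_eq_fourier {E : Type*} [NormedAddCommGroup E] [NormedSpace ℂ E]
    (g : ℝ → E) (a : ℝ) :
    ∫ v : ℝ, Complex.exp (Complex.I * v * a) • g v = 𝓕 g (-(a / (2 * π))) := by
  rw [Real.fourier_real_eq_integral_exp_smul]
  congr with v
  congr 2
  push_cast
  field_simp

theorem contDiff_ofReal_exp_neg_sq_div_two {n : WithTop ℕ∞} :
    ContDiff ℝ n fun y : ℝ => (exp (-(y ^ 2 / 2)) : ℂ) :=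
  Complex.ofRealCLM.contDiff.comp (by fun_prop : ContDiff ℝ n fun y : ℝ => exp (-(y ^ 2 / 2)))

theorem norm_iteratedDeriv_gaussian_mul_comp_le {χ : ℝ → ℂ} {n : ℕ} (hχ : ContDiff ℝ n χ)
    {A B σ s : ℝ}
    (hA : ∀ i ≤ n, ∀ x,
      ‖iteratedDeriv i (fun y : ℝ => (exp (-(y ^ 2 / 2)) : ℂ)) x‖ ≤ A * exp (-(x ^ 2 / 4)))
    (hB : ∀ j ≤ n, ∀ w, ‖iteratedDeriv j χ w‖ ≤ B) (hσ : 1 ≤ σ) (hs : |s| ≤ σ)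
    {k : ℕ} (hk : k ≤ n) (x : ℝ) :
    ‖iteratedDeriv k (fun y => (exp (-(y ^ 2 / 2)) : ℂ) * χ (s * y)) x‖ ≤
      2 ^ n * A * (σ ^ n * B) * exp (-(x ^ 2 / 4)) := by
  have hB0 : 0 ≤ B := (norm_nonneg _).trans (hB 0 n.zero_le 0)
  have hA0 : 0 ≤ A :=
    nonneg_of_mul_nonneg_left ((norm_nonneg _).trans (hA 0 n.zero_le 0)) (exp_pos _)
  have hleib := norm_iteratedDeriv_mul_le_of_forall_le (n := k) (x := x)
    (φ := fun y : ℝ => (exp (-(y ^ 2 / 2)) : ℂ)) (ψ := fun y => χ (s * y))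
    contDiff_ofReal_exp_neg_sq_div_two
    ((hχ.of_le (by exact_mod_cast hk)).comp (contDiff_const.mul contDiff_id))
    (fun i hi => hA i (hi.trans hk) x)
    (fun j hj => (norm_iteratedDeriv_comp_const_mul_le
      (hχ.of_le (by exact_mod_cast hj.trans hk)) (hB j (hj.trans hk)) s x).trans
      (mul_le_mul_of_nonneg_right ((pow_le_pow_left₀ (abs_nonneg s) hs j).trans
        (pow_le_pow_right₀ hσ (hj.trans hk))) hB0))
  refine hleib.trans ?_
  have : (2 : ℝ) ^ k ≤ 2 ^ n := pow_le_pow_right₀ (by norm_num) hk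
  calc _ = 2 ^ k * (σ ^ n * B) * (A * exp (-(x ^ 2 / 4))) := by ring
    _ ≤ 2 ^ n * (σ ^ n * B) * (A * exp (-(x ^ 2 / 4))) := by gcongr
    _ = _ := by ring

theorem iteratedDeriv_mul_comp_const_mul_eq_zero {𝔸 : Type*} [NormedRing 𝔸] [NormedAlgebra ℝ 𝔸]
    (φ : ℝ → 𝔸) {χ : ℝ → 𝔸} {δ s : ℝ} (hs : 0 < s) (hχ : ∀ w, |w| ≤ δ → χ w = 0) (k : ℕ)
    {v : ℝ} (hv : |v| < δ / s) : iteratedDeriv k (fun y => φ y * χ (s * y)) v = 0 := by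
  have hzero : (fun y => φ y * χ (s * y)) =ᶠ[nhds v] fun _ => 0 := by
    filter_upwards [(isOpen_lt continuous_abs continuous_const).mem_nhds hv] with w hw
    have hsw : |s * w| ≤ δ := by
      rw [abs_mul, abs_of_pos hs]
      linarith [(lt_div_iff₀ hs).mp hw]
    rw [hχ _ hsw, mul_zero]
  rw [hzero.iteratedDeriv_eq, iteratedDeriv_const, ite_self]

theorem abs_pow_mul_norm_integral_exp_mul_le {g : ℝ → ℂ} {n : ℕ} (hg : ContDiff ℝ n g) {Λ r : ℝ}
    (hle : ∀ k ≤ n, ∀ v, ‖iteratedDeriv k g v‖ ≤ Λ * exp (-(v ^ 2 / 4))) (hr : 0 ≤ r)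
    (hzero : ∀ v, |v| < r → iteratedDeriv n g v = 0) (a : ℝ) :
    |a| ^ n * ‖(√(2 * π) : ℂ)⁻¹ * ∫ v : ℝ, Complex.exp (Complex.I * v * a) * g v‖ ≤
      2 * Λ * exp (-(r ^ 2 / 8)) := by
  have ha : |a| = 2 * π * |-(a / (2 * π))| := by
    rw [abs_neg, abs_div, abs_of_pos (by positivity : (0 : ℝ) < 2 * π)]
    field_simp
  have hsqrt : √(8 * π) = 2 * √(2 * π) := by
    rw [show 8 * π = 2 ^ 2 * (2 * π) by ring, sqrt_mul (by norm_num), sqrt_sq (by norm_num)]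
  have hfourier := integral_exp_I_mul_smul_eq_fourier g a
  simp only [smul_eq_mul] at hfourier
  rw [hfourier, norm_mul, norm_inv, Complex.norm_real,
    norm_of_nonneg (sqrt_nonneg _)]
  calc _ = (√(2 * π))⁻¹ * ((2 * π * |-(a / (2 * π))|) ^ n * ‖𝓕 g (-(a / (2 * π)))‖) := by
        rw [ha]; ring
    _ ≤ (√(2 * π))⁻¹ * (Λ * √(8 * π) * exp (-(r ^ 2 / 8))) := by
        exact mul_le_mul_of_nonneg_left
          (pow_mul_norm_fourier_le_of_le_gaussian hg hle hr hzero _) (by positivity)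
    _ = 2 * Λ * exp (-(r ^ 2 / 8)) := by
        rw [hsqrt]
        field_simp

theorem stmt_14_general (ε : ℝ) (hε : 0 < ε) (f : ℝ → ℝ)
    (hf : ContDiff ℝ (⊤ : ℕ∞) f)
    (hone : ∀ v : ℝ, |v| ≤ ε / 2 → f v = 1)
    (hzero : ∀ v : ℝ, ε ≤ |v| → f v = 0)
    (m : ℕ) (T : ℝ) :
    ∃ C > 0, ∀ u : ℝ, 0 < u → u < T → ∀ a : ℝ,
      |a| ^ m *
        (fun z : ℂ => ‖z‖)
          ((Real.sqrt (2 * π) : ℂ)⁻¹ *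
            ∫ v : ℝ, Complex.exp (Complex.I * v * a) *
              (Real.exp (-v ^ 2 / 2) : ℂ) *
                ((1 : ℂ) - (f (Real.sqrt u * v) : ℂ))) ≤
        C * Real.exp (-ε ^ 2 / (32 * u)) := by
  have hsupp : HasCompactSupport f :=
    HasCompactSupport.intro (isCompact_Icc (a := -ε) (b := ε)) fun w hw =>
      hzero w (not_lt.mp fun h => hw (abs_le.mp h.le))
  obtain ⟨A, hA0, hA⟩ := exists_pos_forall_le_mul_of_forall_exists (fun x => (exp_pos _).le)
    exists_norm_iteratedDeriv_gaussian_le m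
  obtain ⟨B, hB0, hB⟩ := hsupp.exists_pos_norm_iteratedDeriv_one_sub_ofReal_le hf m
  refine ⟨2 * (2 ^ m * A * (max 1 √T ^ m * B)), by positivity, fun u hu huT a => ?_⟩
  have hχ : ContDiff ℝ m fun w => 1 - (f w : ℂ) :=
    contDiff_const.sub (Complex.ofRealCLM.contDiff.comp (hf.of_le (by exact_mod_cast le_top)))
  have hχ_zero : ∀ w, |w| ≤ ε / 2 → 1 - (f w : ℂ) = 0 := fun w hw => by simp [hone w hw]
  have hs : |√u| ≤ max 1 √T := by
    rw [abs_of_nonneg (sqrt_nonneg u)]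
    exact (sqrt_le_sqrt huT.le).trans (le_max_right _ _)
  have hr : (ε / 2 / √u) ^ 2 / 8 = ε ^ 2 / (32 * u) := by
    rw [div_pow, sq_sqrt hu.le]; ring
  have hbound := abs_pow_mul_norm_integral_exp_mul_le
    (contDiff_ofReal_exp_neg_sq_div_two.mul (hχ.comp (contDiff_const.mul contDiff_id)))
    (fun k hk v => norm_iteratedDeriv_gaussian_mul_comp_le hχ hA hB (le_max_left _ _) hs hk v)
    (by positivity)
    (fun v => iteratedDeriv_mul_comp_const_mul_eq_zero _ (sqrt_pos.2 hu) hχ_zero m) a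
  rw [hr, ← neg_div] at hbound
  convert hbound using 6 with v
  simp only [Function.comp_apply, id, neg_div]
  ring

/-- Fix `ε > 0` and a smooth even cutoff `f` as in (lm4.19), and let
`G_u(a) = (1/√(2π)) ∫ e^{iva} e^{−v²/2} (1 − f(√u v)) dv`.  Then for every
`m ∈ ℕ` and `T > 0` there is `C > 0` with
`|a|^m · |G_u(a)| ≤ C · e^{−ε²/(32u)}` for all `0 < u < T` and `a ∈ ℝ`. -/
theorem stmt_14 (ε : ℝ) (hε : 0 < ε) (f : ℝ → ℝ)
    (hf : ContDiff ℝ (⊤ : ℕ∞) f)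
    (hrange : ∀ v, f v ∈ Set.Icc (0 : ℝ) 1)
    (heven : ∀ v, f (-v) = f v)
    (hone : ∀ v : ℝ, |v| ≤ ε / 2 → f v = 1)
    (hzero : ∀ v : ℝ, ε ≤ |v| → f v = 0)
    (m : ℕ) (T : ℝ) (hT : 0 < T) :
    ∃ C > 0, ∀ u : ℝ, 0 < u → u < T → ∀ a : ℝ,
      |a| ^ m *
        (fun z : ℂ => ‖z‖)
          ((Real.sqrt (2 * π) : ℂ)⁻¹ *
            ∫ v : ℝ, Complex.exp (Complex.I * v * a) *
              (Real.exp (-v ^ 2 / 2) : ℂ) *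
                ((1 : ℂ) - (f (Real.sqrt u * v) : ℂ))) ≤
        C * Real.exp (-ε ^ 2 / (32 * u)) :=
  stmt_14_general ε hε f hf hone hzero m T
end

section
/- Let φ : ℝ → ℂ be a Schwartz function and M ∈ ℕ. Then there exists C > 0 such that for all λ ≥ 1: | ∫_ℝ e^{−λ θ²} φ(θ) dθ − √(π/λ) ∑_{k=0}^{M} φ^{(2k)}(0) / (k! (4λ)^k) | ≤ C λ^{−M − 3/2}, where φ^{(2k)} denotes the 2k-th derivative of φ. -/
open Real MeasureTheory Finset

/-!
Expand `φ` by Taylor's formula at `0` to order `2M + 1`. Against the Gaussian weight the odd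
monomials integrate to zero, and the Gamma integral
`∫ θ^(2k) e^(-Lθ²) dθ = Γ(k + 1/2) L^(-k-1/2) = √(π/L) (2k)! / (k! (4L)^k)`
turns the even ones into the terms of the sum. The Taylor remainder is bounded by
`sup |φ^(2M+2)| · θ^(2M+2) / (2M+1)!`, whose Gaussian integral is `O(L^(-M-3/2))`.
-/

lemma Finset.sum_range_two_mul {M : Type*} [AddCommMonoid M] (f : ℕ → M) (m : ℕ) :
    ∑ j ∈ range (2 * m), f j = ∑ k ∈ range m, (f (2 * k) + f (2 * k + 1)) := by
  induction m with
  | zero => simp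
  | succ m ih =>
    rw [show 2 * (m + 1) = 2 * m + 1 + 1 by ring, sum_range_succ, sum_range_succ, ih,
      sum_range_succ, add_assoc]

section GaussianMoments

open scoped Nat

lemma Real.Gamma_nat_add_half_eq_factorial (k : ℕ) :
    Gamma (k + 1 / 2) = (2 * k)! / (4 ^ k * k !) * √π := by
  induction k with
  | zero => simp [-one_div, Gamma_one_half_eq]
  | succ k ih =>
    rw [Nat.cast_succ, add_right_comm, Gamma_add_one (by positivity), ih,
      show 2 * (k + 1) = 2 * k + 1 + 1 by ring]
    simp only [Nat.factorial_succ]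
    push_cast
    field_simp
    ring

variable {b : ℝ}

lemma integrable_pow_mul_exp_neg_mul_sq (hb : 0 < b) (j : ℕ) :
    Integrable fun x : ℝ => x ^ j * exp (-b * x ^ 2) := by
  simpa using
    integrable_rpow_mul_exp_neg_mul_sq hb (s := j) (by linarith [j.cast_nonneg (α := ℝ)])

lemma integral_pow_mul_exp_neg_mul_sq_of_odd {j : ℕ} (hj : Odd j) :
    ∫ x : ℝ, x ^ j * exp (-b * x ^ 2) = 0 := by
  have h := integral_neg_eq_self (fun x : ℝ => x ^ j * exp (-b * x ^ 2)) volume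
  simp only [hj.neg_pow, even_two.neg_pow, neg_mul, integral_neg] at h
  simp only [neg_mul]
  linarith

lemma integral_pow_two_mul_mul_exp_neg_mul_sq (hb : 0 < b) (k : ℕ) :
    ∫ x : ℝ, x ^ (2 * k) * exp (-b * x ^ 2) =
      (2 * k)! / (4 ^ k * k !) * √π * b ^ (-(k : ℝ) - 1 / 2) := by
  have hIoi := integral_rpow_mul_exp_neg_mul_rpow two_pos
    (by linarith [(2 * k).cast_nonneg (α := ℝ)] : (-1 : ℝ) < (2 * k : ℕ)) hb
  simp only [rpow_natCast, rpow_two] at hIoi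
  have habs : (fun x : ℝ => x ^ (2 * k) * exp (-b * x ^ 2)) =
      fun x => |x| ^ (2 * k) * exp (-b * |x| ^ 2) := by
    simp [(even_two_mul k).pow_abs]
  rw [habs, integral_comp_abs (f := fun x => x ^ (2 * k) * exp (-b * x ^ 2)), hIoi,
    show ((2 * k : ℕ) + 1 : ℝ) / 2 = k + 1 / 2 by push_cast; ring,
    Real.Gamma_nat_add_half_eq_factorial,
    show -((2 * k : ℕ) + 1 : ℝ) / 2 = -(k : ℝ) - 1 / 2 by push_cast; ring]
  ring

lemma Real.rpow_neg_natCast_sub_half (hb : 0 < b) (k : ℕ) :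
    b ^ (-(k : ℝ) - 1 / 2) = (b ^ k * √b)⁻¹ := by
  rw [show -(k : ℝ) - 1 / 2 = -((k : ℝ) + 1 / 2) by ring, rpow_neg hb.le,
    rpow_add hb, rpow_natCast, ← sqrt_eq_rpow]

end GaussianMoments

section TaylorGaussian

open scoped Nat

variable {E : Type*} [NormedAddCommGroup E] [NormedSpace ℝ E]

lemma taylorWithinEval_univ_zero (f : ℝ → E) (n : ℕ) (x : ℝ) :
    taylorWithinEval f n Set.univ 0 x =
      ∑ j ∈ range (n + 1), (x ^ j / j !) • iteratedDeriv j f 0 := by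
  simp only [taylor_within_apply, iteratedDerivWithin_univ, sub_zero, inv_mul_eq_div]

lemma norm_sub_taylorWithinEval_univ_zero_le [CompleteSpace E] {f : ℝ → E} {n : ℕ}
    (hf : ContDiff ℝ (n + 1 : ℕ) f) {C : ℝ} (hC : ∀ t, ‖iteratedDeriv (n + 1) f t‖ ≤ C)
    (x : ℝ) : ‖f x - taylorWithinEval f n Set.univ 0 x‖ ≤ C / n ! * |x| ^ (n + 1) := by
  rcases eq_or_ne x 0 with rfl | hx
  · simp [taylorWithinEval_self]
  have hs : UniqueDiffOn ℝ (Set.uIcc 0 x) := uniqueDiffOn_uIcc hx.symm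
  have hderiv : ∀ {k}, k ≤ n + 1 → ∀ t ∈ Set.uIcc 0 x,
      iteratedDerivWithin k f (Set.uIcc 0 x) t = iteratedDeriv k f t := fun hk t ht =>
    iteratedDerivWithin_eq_iteratedDeriv hs (hf.contDiffAt.of_le (by exact_mod_cast hk)) ht
  have htaylor :
      taylorWithinEval f n Set.univ 0 x = taylorWithinEval f n (Set.uIcc 0 x) 0 x := by
    simp only [taylor_within_apply, iteratedDerivWithin_univ]
    refine sum_congr rfl fun k hk => ?_
    rw [hderiv (by grind) 0 Set.left_mem_uIcc]
  rw [htaylor, taylor_integral_remainder hf.contDiffOn]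
  calc _ ≤ |x| ^ n / n ! * C * |x - 0| := by
        refine intervalIntegral.norm_integral_le_of_norm_le_const fun t ht => ?_
        have ht' : t ∈ Set.uIcc 0 x := Set.uIoc_subset_uIcc ht
        rw [norm_smul, hderiv le_rfl t ht', norm_div, norm_pow, Real.norm_eq_abs,
          Real.norm_natCast]
        have hxt : |x - t| ≤ |x| := by simpa using Set.abs_sub_right_of_mem_uIcc ht'
        gcongr
        exact hC t
    _ = C / n ! * |x| ^ (n + 1) := by rw [sub_zero, pow_succ]; ring

lemma exp_neg_mul_sq_smul_monomial (b : ℝ) (j : ℕ) (c : ℝ) (v : E) (x : ℝ) :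
    exp (-b * x ^ 2) • (x ^ j / c) • v = (x ^ j * exp (-b * x ^ 2) / c) • v := by
  rw [smul_smul]; ring_nf

lemma integrable_exp_neg_mul_sq_smul_monomial {b : ℝ} (hb : 0 < b) (j : ℕ) (c : ℝ)
    (v : E) :
    Integrable fun x : ℝ => exp (-b * x ^ 2) • (x ^ j / c) • v := by
  simp only [exp_neg_mul_sq_smul_monomial]
  exact ((integrable_pow_mul_exp_neg_mul_sq hb j).div_const c).smul_const v

lemma integrable_exp_neg_mul_sq_smul_taylorWithinEval {b : ℝ} (hb : 0 < b) (f : ℝ → E)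
    (n : ℕ) :
    Integrable fun x => exp (-b * x ^ 2) • taylorWithinEval f n Set.univ 0 x := by
  simp only [taylorWithinEval_univ_zero, smul_sum]
  exact integrable_finsetSum _ fun j _ => integrable_exp_neg_mul_sq_smul_monomial hb j _ _

lemma integral_exp_neg_mul_sq_smul_taylorWithinEval [CompleteSpace E] {b : ℝ} (hb : 0 < b)
    (f : ℝ → E) (m : ℕ) :
    ∫ x, exp (-b * x ^ 2) • taylorWithinEval f (2 * m + 1) Set.univ 0 x =
      ∑ k ∈ range (m + 1), (√(π / b) / (k ! * (4 * b) ^ k)) • iteratedDeriv (2 * k) f 0 := by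
  simp only [taylorWithinEval_univ_zero, smul_sum]
  rw [integral_finsetSum _ fun j _ => integrable_exp_neg_mul_sq_smul_monomial hb j _ _,
    show 2 * m + 1 + 1 = 2 * (m + 1) by ring, Finset.sum_range_two_mul]
  refine sum_congr rfl fun k _ => ?_
  simp only [exp_neg_mul_sq_smul_monomial]
  rw [integral_smul_const, integral_smul_const, integral_div, integral_div,
    integral_pow_mul_exp_neg_mul_sq_of_odd (odd_two_mul_add_one k), zero_div, zero_smul,
    add_zero, integral_pow_two_mul_mul_exp_neg_mul_sq hb, rpow_neg_natCast_sub_half hb,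
    sqrt_div' _ hb.le]
  congr 1
  field_simp
  ring

theorem norm_integral_exp_neg_mul_sq_smul_sub_le [CompleteSpace E] {f : ℝ → E} {M : ℕ}
    (hf : ContDiff ℝ (2 * M + 2 : ℕ) f) {C : ℝ}
    (hC : ∀ t, ‖iteratedDeriv (2 * M + 2) f t‖ ≤ C) {b : ℝ} (hb : 0 < b) :
    ‖(∫ x, exp (-b * x ^ 2) • f x) -
        ∑ k ∈ range (M + 1), (√(π / b) / (k ! * (4 * b) ^ k)) • iteratedDeriv (2 * k) f 0‖ ≤
      C / (2 * M + 1)! * ((2 * (M + 1))! / (4 ^ (M + 1) * (M + 1)!) * √π) *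
        b ^ (-(M : ℝ) - 3 / 2) := by
  set P := fun x => taylorWithinEval f (2 * M + 1) Set.univ 0 x
  have hP : Integrable fun x => exp (-b * x ^ 2) • P x :=
    integrable_exp_neg_mul_sq_smul_taylorWithinEval hb f _
  have hPcont : Continuous P := by
    simp only [P, taylorWithinEval_univ_zero]
    fun_prop
  have hrem : ∀ x, ‖exp (-b * x ^ 2) • (f x - P x)‖ ≤
      C / (2 * M + 1)! * (x ^ (2 * (M + 1)) * exp (-b * x ^ 2)) := fun x => by
    have h := norm_sub_taylorWithinEval_univ_zero_le hf hC x
    rw [show 2 * M + 1 + 1 = 2 * (M + 1) by ring, (even_two_mul _).pow_abs] at h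
    rw [norm_smul, norm_of_nonneg (exp_pos _).le]
    calc _ ≤ exp (-b * x ^ 2) * (C / (2 * M + 1)! * x ^ (2 * (M + 1))) := by gcongr
      _ = _ := by ring
  have hR : Integrable fun x => exp (-b * x ^ 2) • (f x - P x) :=
    ((integrable_pow_mul_exp_neg_mul_sq hb _).const_mul _).mono'
      (by have := hf.continuous; fun_prop) (ae_of_all _ hrem)
  have hsplit : ∫ x, exp (-b * x ^ 2) • f x =
      (∫ x, exp (-b * x ^ 2) • (f x - P x)) + ∫ x, exp (-b * x ^ 2) • P x := by
    rw [← integral_add hR hP]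
    simp only [smul_sub, sub_add_cancel]
  rw [hsplit, ← integral_exp_neg_mul_sq_smul_taylorWithinEval hb f M, add_sub_cancel_right]
  calc _ ≤ ∫ x, C / (2 * M + 1)! * (x ^ (2 * (M + 1)) * exp (-b * x ^ 2)) :=
        norm_integral_le_of_norm_le ((integrable_pow_mul_exp_neg_mul_sq hb _).const_mul _)
          (ae_of_all _ hrem)
    _ = _ := by
      rw [integral_const_mul, integral_pow_two_mul_mul_exp_neg_mul_sq hb]
      push_cast
      ring_nf

end TaylorGaussian

lemma Complex.exp_neg_ofReal_mul_sq_mul (b x : ℝ) (z : ℂ) :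
    Complex.exp (-(b : ℂ) * (x : ℂ) ^ 2) * z = Real.exp (-b * x ^ 2) • z := by
  rw [Complex.real_smul, Complex.ofReal_exp]
  push_cast
  rfl

/-- Gaussian stationary phase: for a Schwartz function `φ : ℝ → ℂ` and `M ∈ ℕ`,
there is `C > 0` such that for all `L ≥ 1`:
`| ∫ e^{−Lθ²} φ(θ) dθ − √(π/L) ∑_{k=0}^M φ^{(2k)}(0)/(k! (4L)^k) |
  ≤ C · L^{−M−3/2}`. -/
theorem stmt_17 (φ : SchwartzMap ℝ ℂ) (M : ℕ) :
    ∃ C > 0, ∀ L : ℝ, 1 ≤ L →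
      ‖(∫ θ : ℝ, Complex.exp (-(L : ℂ) * (θ : ℂ) ^ 2) * φ θ) -
          (Real.sqrt (π / L) : ℂ) *
            ∑ k ∈ Finset.range (M + 1),
              iteratedDeriv (2 * k) (fun x : ℝ => φ x) 0 /
                ((k.factorial : ℂ) * ((4 * L : ℝ) : ℂ) ^ k)‖ ≤
        C * L ^ (-(M : ℝ) - 3 / 2) := by
  set C₀ := SchwartzMap.seminorm ℝ 0 (2 * M + 2) φ + 1
  have hC₀ : ∀ t, ‖iteratedDeriv (2 * M + 2) φ t‖ ≤ C₀ := fun t => by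
    have h := SchwartzMap.le_seminorm ℝ 0 (2 * M + 2) φ t
    rw [pow_zero, one_mul, norm_iteratedFDeriv_eq_norm_iteratedDeriv] at h
    linarith
  refine ⟨C₀ / (2 * M + 1).factorial *
    ((2 * (M + 1)).factorial / (4 ^ (M + 1) * (M + 1).factorial) * √π), by positivity,
    fun L hL => ?_⟩
  calc _ = ‖(∫ θ : ℝ, Real.exp (-L * θ ^ 2) • φ θ) - ∑ k ∈ range (M + 1),
          (√(π / L) / (k.factorial * (4 * L) ^ k)) • iteratedDeriv (2 * k) φ 0‖ := by
        congr 2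
        · exact integral_congr_ae
            (ae_of_all _ fun θ => Complex.exp_neg_ofReal_mul_sq_mul L θ (φ θ))
        · rw [mul_sum]
          refine sum_congr rfl fun k _ => ?_
          rw [Complex.real_smul]
          push_cast
          ring
    _ ≤ _ := norm_integral_exp_neg_mul_sq_smul_sub_le (φ.smooth _) hC₀ (by linarith)
end
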